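/- arXiv:1011.3384 — 7 statements merged into one kernel-verified Lean document; each statement's English description precedes it below -/
import Mathlib

section
/- Every 2k-factor-critical graph of even order is k-extendable. -/
open SimpleGraph

/-- `G` has a perfect matching. -/
def HasPM {W : Type*} (G : SimpleGraph W) : Prop :=
  ∃ M : G.Subgraph, M.IsPerfectMatching

/-- `G` is `k`-extendable: `G` is connected, has a matching of size `k`, and every
matching of size `k` extends to a perfect matching. -/
def IsKExtendable {W : Type*} (G : SimpleGraph W) (k : ℕ) : Prop :=
  G.Connected ∧
  (∃ M : G.Subgraph, M.IsMatching ∧ M.verts.ncard = 2 * k) ∧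
  ∀ M : G.Subgraph, M.IsMatching → M.verts.ncard = 2 * k →
    ∃ P : G.Subgraph, P.IsPerfectMatching ∧ M ≤ P

/-- `G` is `n`-factor-critical: deleting any `n` vertices leaves a graph with a
perfect matching. -/
def IsNFactorCritical {W : Type*} (G : SimpleGraph W) (n : ℕ) : Prop :=
  ∀ S : Finset W, S.card = n → HasPM (G.induce ((↑S : Set W)ᶜ))

/-- The independence number of `G`. -/
noncomputable def indepNum {W : Type*} (G : SimpleGraph W) : ℕ :=
  sSup {n | ∃ s : Finset W, (∀ u ∈ s, ∀ v ∈ s, ¬ G.Adj u v) ∧ s.card = n}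

/-- The number of odd connected components of `G`. -/
noncomputable def numOddComponents {W : Type*} (G : SimpleGraph W) : ℕ :=
  Nat.card {c : G.ConnectedComponent // Odd (Nat.card c.supp)}

/-- `G` is `k½`-extendable: `G` is connected and for every vertex `v`, `G - v` has a
matching of size `k` and every matching of size `k` in `G - v` extends to a perfect
matching of `G - v`. -/
def IsHalfExtendable {W : Type*} (G : SimpleGraph W) (k : ℕ) : Prop :=
  G.Connected ∧
  ∀ v : W,
    (∃ M : (G.induce ({v} : Set W)ᶜ).Subgraph, M.IsMatching ∧ M.verts.ncard = 2 * k) ∧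
    ∀ M : (G.induce ({v} : Set W)ᶜ).Subgraph, M.IsMatching → M.verts.ncard = 2 * k →
      ∃ P : (G.induce ({v} : Set W)ᶜ).Subgraph, P.IsPerfectMatching ∧ M ≤ P

/-- The join of two graphs: all edges between the two vertex classes are added. -/
def graphJoin {α β : Type*} (G : SimpleGraph α) (H : SimpleGraph β) :
    SimpleGraph (α ⊕ β) :=
  SimpleGraph.fromRel (fun a b =>
    match a, b with
    | Sum.inl u, Sum.inl v => G.Adj u v
    | Sum.inr u, Sum.inr v => H.Adj u v
    | _, _ => True)

/-- The disjoint union of two graphs. -/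
def graphUnion {α β : Type*} (G : SimpleGraph α) (H : SimpleGraph β) :
    SimpleGraph (α ⊕ β) :=
  SimpleGraph.fromRel (fun a b =>
    match a, b with
    | Sum.inl u, Sum.inl v => G.Adj u v
    | Sum.inr u, Sum.inr v => H.Adj u v
    | _, _ => False)

/-- The join `G ∨ K₁`: one new vertex joined to every vertex of `G`. -/
def joinK1 {W : Type*} (G : SimpleGraph W) : SimpleGraph (W ⊕ Unit) :=
  graphJoin G (⊥ : SimpleGraph Unit)

/-- `G` is the join of a graph on `n` vertices with the disjoint union of two cliques
of size `m` (intrinsic formulation of `G = G₀ ∨ (K_m ∪ K_m)`). -/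
def IsJoinTwoCliques {W : Type*} [Fintype W] [DecidableEq W] (G : SimpleGraph W) (n m : ℕ) : Prop :=
  ∃ S A B : Finset W,
    Disjoint S A ∧ Disjoint S B ∧ Disjoint A B ∧ S ∪ A ∪ B = Finset.univ ∧
    S.card = n ∧ A.card = m ∧ B.card = m ∧
    (∀ u ∈ A, ∀ v ∈ A, u ≠ v → G.Adj u v) ∧
    (∀ u ∈ B, ∀ v ∈ B, u ≠ v → G.Adj u v) ∧
    (∀ u ∈ A, ∀ v ∈ B, ¬ G.Adj u v) ∧
    (∀ u ∈ S, ∀ v ∈ A ∪ B, G.Adj u v)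

/-- `A` induces in `G` the disjoint union of two factor-critical connected components,
each of size at least `minSize`. -/
def TwoFCComponents {W : Type*} [DecidableEq W] (G : SimpleGraph W) (A : Finset W) (minSize : ℕ) : Prop :=
  ∃ B C : Finset W,
    Disjoint B C ∧ B ∪ C = A ∧ minSize ≤ B.card ∧ minSize ≤ C.card ∧
    (∀ u ∈ B, ∀ v ∈ C, ¬ G.Adj u v) ∧
    (G.induce (↑B : Set W)).Connected ∧ (G.induce (↑C : Set W)).Connected ∧
    IsNFactorCritical (G.induce (↑B : Set W)) 1 ∧
    IsNFactorCritical (G.induce (↑C : Set W)) 1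


/-- Key extension step: any matching whose vertex set has size `2*k` extends to a
perfect matching, given `2k`-factor-criticality. -/
lemma extend_of_fc {V : Type*} [Fintype V] (G : SimpleGraph V) (k : ℕ)
    (hfc : IsNFactorCritical G (2 * k))
    (M : G.Subgraph) (hM : M.IsMatching) (hMc : M.verts.ncard = 2 * k) :
    ∃ P : G.Subgraph, P.IsPerfectMatching ∧ M ≤ P := by
  classical
  have hfin : M.verts.Finite := Set.toFinite _
  set S : Finset V := hfin.toFinset with hSdef
  have hScoe : (↑S : Set V) = M.verts := hfin.coe_toFinset
  have hScard : S.card = 2 * k := by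
    rw [hSdef, ← Set.ncard_eq_toFinset_card _ hfin, hMc]
  obtain ⟨P', hP'⟩ := hfc S hScard
  let f := (SimpleGraph.Embedding.induce ((↑S : Set V)ᶜ) (G := G)).toHom
  have hfinj : Function.Injective f := Subtype.val_injective
  let N : G.Subgraph := P'.map f
  have hNm : N.IsMatching := hP'.1.map f hfinj
  have hNverts : N.verts = (↑S : Set V)ᶜ := by
    have hsp : P'.verts = Set.univ := hP'.2.verts_eq_univ
    show f '' P'.verts = _
    rw [hsp, Set.image_univ]
    exact Subtype.range_coe
  have hdisj : Disjoint M.support N.support := by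
    have hNs : N.support ⊆ M.vertsᶜ := by
      rw [hNm.support_eq_verts, hNverts, hScoe]
    exact Set.disjoint_of_subset M.support_subset_verts hNs disjoint_compl_right
  refine ⟨M ⊔ N, ⟨hM.sup hNm hdisj, ?_⟩, le_sup_left⟩
  intro v
  show v ∈ M.verts ∪ N.verts
  rw [hNverts, ← hScoe]
  by_cases hv : v ∈ (↑S : Set V)
  · exact Or.inl hv
  · exact Or.inr hv

/-- Every 2k-factor-critical (connected) graph of even order (with ν ≥ 2k+2) is k-extendable. -/
theorem twoK_factorCritical_is_kExtendable {V : Type*} [Fintype V]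
    (G : SimpleGraph V) (k : ℕ) (hconn : G.Connected)
    (heven : Even (Fintype.card V)) (hcard : 2 * k + 2 ≤ Fintype.card V)
    (hfc : IsNFactorCritical G (2 * k)) :
    IsKExtendable G k := by
  classical
  have key : ∀ j, j ≤ k → ∃ M : G.Subgraph, M.IsMatching ∧ M.verts.ncard = 2 * j := by
    intro j
    induction j with
    | zero =>
      intro _
      exact ⟨⊥, fun v hv => absurd hv (by simp), by simp⟩
    | succ j ih =>
      intro hj
      obtain ⟨M, hM, hMc⟩ := ih (Nat.le_of_lt hj)
      have hfin : M.verts.Finite := Set.toFinite _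
      have hcard' : hfin.toFinset.card = 2 * j := by
        rw [← Set.ncard_eq_toFinset_card _ hfin, hMc]
      obtain ⟨S, hsub, -, hScard⟩ :=
        Finset.exists_subsuperset_card_eq (n := 2 * k) (Finset.subset_univ hfin.toFinset)
          (by rw [hcard']; omega) (by rw [Finset.card_univ]; omega)
      obtain ⟨P', hP'⟩ := hfc S hScard
      have hScompl : Sᶜ.Nonempty := by
        rw [← Finset.card_pos, Finset.card_compl, hScard]
        omega
      obtain ⟨v, hv⟩ := hScompl
      have hv' : v ∈ (↑S : Set V)ᶜ := by
        simpa using (Finset.mem_compl.mp hv)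
      obtain ⟨w, hw, -⟩ := hP'.1 (hP'.2 ⟨v, hv'⟩)
      have hadj : G.Adj v (↑w) := P'.adj_sub hw
      have hMsub : M.verts ⊆ (↑S : Set V) := by
        intro x hx
        exact hsub (hfin.mem_toFinset.mpr hx)
      have hvw : ({v, ↑w} : Set V) ⊆ (↑S : Set V)ᶜ := by
        rintro x (rfl | rfl)
        · exact hv'
        · exact w.2
      have hdisj : Disjoint M.verts ({v, ↑w} : Set V) :=
        Set.disjoint_of_subset hMsub hvw disjoint_compl_right
      have hdisj' : Disjoint M.support (G.subgraphOfAdj hadj).support := by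
        refine Set.disjoint_of_subset M.support_subset_verts
          (SimpleGraph.Subgraph.support_subset_verts _) ?_
        simpa using hdisj
      refine ⟨M ⊔ G.subgraphOfAdj hadj,
        hM.sup (SimpleGraph.Subgraph.IsMatching.subgraphOfAdj hadj) hdisj', ?_⟩
      show (M.verts ∪ {v, ↑w}).ncard = 2 * (j + 1)
      rw [Set.ncard_union_eq hdisj (Set.toFinite _) (Set.toFinite _), hMc,
        Set.ncard_pair hadj.ne]
      omega
  refine ⟨hconn, key k le_rfl, ?_⟩
  intro M hMm hMc
  exact extend_of_fc G k hfc M hMm hMc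
end

section
/- Let G be a non-bipartite k-extendable graph on ν = 4k vertices with minimum degree δ(G) ≥ 3k. Then G is 2k-factor-critical. -/
open SimpleGraph

/-!
Deleting any `2k` vertices leaves a graph on `2k` vertices of minimum degree at least `k`, and such
a graph has a perfect matching. Indeed, take a maximum matching and suppose two vertices `u`, `v`
are uncovered. All their neighbours are covered, and `deg u + deg v ≥ 2k` exceeds the number of
covered vertices, so some matching edge `xy` has `u ~ x` and `v ~ y`; replacing `xy` by `ux` and
`vy` gives a larger matching.
-/

open Finset

theorem Finset.exists_ne_notMem_of_even_card {α : Type*} [Fintype α] [DecidableEq α]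
    {s : Finset α} (hα : Even (Fintype.card α)) (hs : Even #s) (hsu : s ≠ univ) :
    ∃ u ∉ s, ∃ v ∉ s, u ≠ v := by
  have heven : Even #sᶜ := by
    rw [card_compl]
    exact hα.tsub hs
  have hpos : sᶜ.Nonempty := nonempty_iff_ne_empty.mpr (by rwa [Ne, compl_eq_empty_iff])
  obtain ⟨u, hu, v, hv, huv⟩ :=
    one_lt_card.mp (show 1 < #sᶜ by rcases heven with ⟨r, hr⟩; have := hpos.card_pos; omega)
  exact ⟨u, mem_compl.mp hu, v, mem_compl.mp hv, huv⟩

namespace SimpleGraph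

theorem degree_sub_card_le_degree_induce_compl {V : Type*} [Fintype V] [DecidableEq V]
    (G : SimpleGraph V) [DecidableRel G.Adj] (S : Finset V) (v : ↥(S : Set V)ᶜ) :
    G.degree v - #S ≤ (G.induce (S : Set V)ᶜ).degree v := by
  rw [← card_neighborFinset_eq_degree, ← card_neighborFinset_eq_degree,
    ← card_map (.subtype _), map_neighborFinset_induce]
  convert le_card_sdiff S (G.neighborFinset v) using 2
  ext; simp

variable {W : Type*} (H : SimpleGraph W)

/-- A matching covering exactly `s`, encoded by its partner function `f`. -/
def IsMatchingInvolution (s : Finset W) (f : W → W) : Prop :=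
  ∀ y ∈ s, f y ∈ s ∧ f (f y) = y ∧ H.Adj y (f y)

namespace IsMatchingInvolution

variable {H} {s t : Finset W} {f g : W → W}

theorem even_card (hf : H.IsMatchingInvolution s f) : Even #s := by
  have hsum : ∑ _y ∈ s, (1 : ZMod 2) = 0 :=
    sum_involution (fun y _ => f y) (fun _ _ => by decide) (fun y hy _ => (hf y hy).2.2.ne.symm)
      (fun y hy => (hf y hy).1) (fun y hy => (hf y hy).2.1)
  simpa [ZMod.natCast_eq_zero_iff_even] using hsum

theorem pair [DecidableEq W] {u w : W} (huw : H.Adj u w) :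
    H.IsMatchingInvolution {u, w} (Equiv.swap u w) := by
  intro y hy
  rcases mem_insert.mp hy with rfl | hy
  · simpa using huw
  · rw [mem_singleton.mp hy]
    simpa using huw.symm

theorem union [DecidableEq W] (hf : H.IsMatchingInvolution s f) (hg : H.IsMatchingInvolution t g)
    (hst : Disjoint s t) : H.IsMatchingInvolution (s ∪ t) (s.piecewise f g) := by
  intro y hy
  by_cases hys : y ∈ s
  · obtain ⟨hfy, hffy, hadj⟩ := hf y hys
    simp [hys, hfy, hffy, hadj]
  · have hyt : y ∈ t := by simpa [hys] using hy
    obtain ⟨hgy, hggy, hadj⟩ := hg y hyt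
    have hgys : g y ∉ s := disjoint_right.mp hst hgy
    simp [hys, hgy, hggy, hadj, hgys]

theorem sdiff_pair [DecidableEq W] (hf : H.IsMatchingInvolution s f) {x : W} (hx : x ∈ s) :
    H.IsMatchingInvolution (s \ {x, f x}) f := by
  intro y hy
  obtain ⟨hys, hyx⟩ := mem_sdiff.mp hy
  obtain ⟨hfy, hffy, hadj⟩ := hf y hys
  refine ⟨mem_sdiff.mpr ⟨hfy, ?_⟩, hffy, hadj⟩
  simp only [mem_insert, mem_singleton, not_or] at hyx ⊢
  exact ⟨fun h => hyx.2 (by rw [← h, hffy]),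
    fun h => hyx.1 (by rw [← hffy, h, (hf x hx).2.1])⟩

theorem exists_insert_insert_of_adj [DecidableEq W] (hf : H.IsMatchingInvolution s f) {u w : W}
    (hu : u ∉ s) (hw : w ∉ s) (huw : H.Adj u w) :
    ∃ g, H.IsMatchingInvolution (insert u (insert w s)) g := by
  have hdisj : Disjoint ({u, w} : Finset W) s := by simp [hu, hw]
  exact ⟨_, by simpa using (pair huw).union hf hdisj⟩

theorem exists_insert_insert_of_augmenting [DecidableEq W] (hf : H.IsMatchingInvolution s f)
    {u v x : W} (hu : u ∉ s) (hv : v ∉ s) (huv : u ≠ v) (hx : x ∈ s)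
    (hux : H.Adj u x) (hvx : H.Adj v (f x)) :
    ∃ g, H.IsMatchingInvolution (insert u (insert v s)) g := by
  obtain ⟨hfx, -, hadj⟩ := hf x hx
  have hxfx := hadj.ne
  have hdisj₁ : Disjoint ({u, x} : Finset W) {v, f x} := by
    rw [Finset.disjoint_left]; simp only [mem_insert, mem_singleton]; grind
  have hdisj₂ : Disjoint (s \ {x, f x}) ({u, x} ∪ {v, f x}) := by
    rw [Finset.disjoint_left]; intro y hy; simp only [mem_sdiff] at hy; grind
  have hunion : s \ {x, f x} ∪ ({u, x} ∪ {v, f x}) = insert u (insert v s) := by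
    ext y; simp only [mem_union, mem_sdiff, mem_insert]; grind
  exact ⟨_, hunion ▸ (hf.sdiff_pair hx).union ((pair hux).union (pair hvx) hdisj₁) hdisj₂⟩

theorem exists_adj_adj_of_card_lt [Fintype W] [DecidableRel H.Adj]
    (hf : H.IsMatchingInvolution s f) {u v : W}
    (hu : H.neighborFinset u ⊆ s) (hv : H.neighborFinset v ⊆ s)
    (hlt : #s < H.degree u + H.degree v) : ∃ x ∈ s, H.Adj u x ∧ H.Adj v (f x) := by
  classical
  have degree_eq : ∀ {w}, H.neighborFinset w ⊆ s → H.degree w = #{x ∈ s | H.Adj w x} := by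
    intro w hw
    rw [← card_neighborFinset_eq_degree]
    congr 1; ext x
    simp only [mem_filter, mem_neighborFinset]
    exact ⟨fun h => ⟨hw (by simpa using h), h⟩, And.right⟩
  have hdv : H.degree v = #{x ∈ s | H.Adj v (f x)} := by
    rw [degree_eq hv]
    refine card_nbij' f f ?_ ?_ ?_ ?_ <;> intro x hx <;>
      simp only [coe_filter, Set.mem_ofPred_eq] at hx ⊢
    · exact ⟨(hf x hx.1).1, by rw [(hf x hx.1).2.1]; exact hx.2⟩
    · exact ⟨(hf x hx.1).1, hx.2⟩
    · exact (hf x hx.1).2.1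
    · exact (hf x hx.1).2.1
  by_contra! h
  have hdisj : Disjoint {x ∈ s | H.Adj u x} {x ∈ s | H.Adj v (f x)} := disjoint_filter.mpr h
  have := card_le_card (union_subset (filter_subset (H.Adj u) s)
    (filter_subset (fun x => H.Adj v (f x)) s))
  rw [card_union_of_disjoint hdisj] at this
  rw [degree_eq hu, hdv] at hlt
  omega

theorem exists_isPerfectMatching [Fintype W] (hf : H.IsMatchingInvolution univ f) :
    ∃ M : H.Subgraph, M.IsPerfectMatching := by
  let M : H.Subgraph :=
    { verts := Set.univ
      Adj := fun a b => f a = b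
      adj_sub := by rintro a _ rfl; exact (hf a (mem_univ a)).2.2
      edge_vert := fun _ => Set.mem_univ _
      symm := ⟨by rintro a _ rfl; exact (hf a (mem_univ a)).2.1⟩ }
  exact ⟨M, M.isPerfectMatching_iff.mpr fun v => existsUnique_eq'⟩

end IsMatchingInvolution

theorem exists_isPerfectMatching_of_forall_le_degree [Fintype W] [DecidableRel H.Adj] {m : ℕ}
    (hcard : Fintype.card W = 2 * m) (hdeg : ∀ v, m ≤ H.degree v) :
    ∃ M : H.Subgraph, M.IsPerfectMatching := by
  classical
  obtain ⟨s, hs, hmax⟩ :=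
    exists_max_image {s : Finset W | ∃ f, H.IsMatchingInvolution s f} card
      ⟨∅, mem_filter.mpr ⟨mem_univ _, id, by simp [IsMatchingInvolution]⟩⟩
  obtain ⟨f, hf⟩ := (mem_filter.mp hs).2
  replace hmax : ∀ t, (∃ g, H.IsMatchingInvolution t g) → #t ≤ #s := fun t ht =>
    hmax t (mem_filter.mpr ⟨mem_univ t, ht⟩)
  have card_insert_insert {u v} (hu : u ∉ s) (hv : v ∉ s) (huv : u ≠ v) :
      #(insert u (insert v s)) = #s + 2 := by
    rw [card_insert_of_notMem (by simp [huv, hu]), card_insert_of_notMem hv]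
  have hout : ∀ u ∉ s, H.neighborFinset u ⊆ s := by
    intro u hu w hw
    rw [mem_neighborFinset] at hw
    by_contra hws
    have := hmax _ (hf.exists_insert_insert_of_adj hu hws hw)
    rw [card_insert_insert hu hws hw.ne] at this
    omega
  by_cases hsu : s = univ
  · subst hsu
    exact hf.exists_isPerfectMatching
  obtain ⟨u, hu, v, hv, huv⟩ :=
    exists_ne_notMem_of_even_card (hcard ▸ even_two_mul m) hf.even_card hsu
  have hle := card_le_univ (insert u (insert v s))
  rw [card_insert_insert hu hv huv, hcard] at hle
  obtain ⟨x, hx, hux, hvx⟩ :=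
    hf.exists_adj_adj_of_card_lt (hout u hu) (hout v hv) (by linarith [hdeg u, hdeg v])
  have := hmax _ (hf.exists_insert_insert_of_augmenting hu hv huv hx hux hvx)
  rw [card_insert_insert hu hv huv] at this
  omega

end SimpleGraph

theorem extendable_4k_minDegree_3k_factorCritical_general {V : Type*} [Fintype V]
    (G : SimpleGraph V) [DecidableRel G.Adj] (k : ℕ)
    (hcard : Fintype.card V = 4 * k) (hdeg : 3 * k ≤ G.minDegree) :
    IsNFactorCritical G (2 * k) := by
  classical
  intro S hS
  have hcardS : Fintype.card ↥(S : Set V)ᶜ = 2 * k := by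
    simp only [Fintype.card_compl_set, coe_sort_coe, Fintype.card_coe, hcard, hS]
    omega
  refine (G.induce _).exists_isPerfectMatching_of_forall_le_degree hcardS fun v => ?_
  have := G.degree_sub_card_le_degree_induce_compl S v
  have := G.minDegree_le_degree v
  omega

/-- A non-bipartite k-extendable graph on 4k vertices with δ(G) ≥ 3k is 2k-factor-critical. -/
theorem extendable_4k_minDegree_3k_factorCritical {V : Type*} [Fintype V] [DecidableEq V]
    (G : SimpleGraph V) [DecidableRel G.Adj] (k : ℕ)
    (hnb : ¬ G.Colorable 2) (hext : IsKExtendable G k)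
    (hcard : Fintype.card V = 4 * k) (hdeg : 3 * k ≤ G.minDegree) :
    IsNFactorCritical G (2 * k) :=
  extendable_4k_minDegree_3k_factorCritical_general G k hcard hdeg
end

section
/- The graph G = K_{(ν+n)/2} ∨ ((ν−n)/2)K₁ (the join of a complete graph on (ν+n)/2 vertices with (ν−n)/2 isolated vertices), where ν ≡ n (mod 2), is n-factor-critical and has independence number exactly (ν−n)/2. -/
open SimpleGraph

/-!
Deleting `n` vertices of `K_{(ν+n)/2} ∨ ((ν-n)/2)K₁` leaves `ν - n` vertices, at most
`(ν-n)/2` of them outside the clique. The surviving clique vertices are universal and at least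
as many, so the others can be matched into them and the remaining, evenly many, clique vertices
paired among themselves. An independent set containing a clique vertex is a singleton, so the
isolated vertices form a maximum independent set.
-/

namespace SimpleGraph

variable {V : Type*} {G : SimpleGraph V}

theorem exists_isPerfectMatching_of_subset_universalVerts [Finite V] {C : Set V}
    (hC : C ⊆ G.universalVerts) (hcard : Cᶜ.ncard ≤ C.ncard) (heven : Even (Nat.card V)) :
    ∃ M : G.Subgraph, M.IsPerfectMatching := by
  classical
  have hU : G.universalVertsᶜ.ncard ≤ G.universalVerts.ncard :=
    (Set.ncard_le_ncard (Set.compl_subset_compl.2 hC)).trans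
      (hcard.trans (Set.ncard_le_ncard hC))
  obtain ⟨t, htU, M, hMverts, hM⟩ :=
    Subgraph.IsMatching.exists_of_universalVerts disjoint_compl_right hU
  have hrest : (G.universalVertsᶜ ∪ t)ᶜ = G.universalVerts \ t := by
    rw [Set.compl_union, compl_compl, Set.sdiff_eq]
  have hMeven : Even (G.universalVertsᶜ ∪ t).ncard := by
    have := Fintype.ofFinite V
    simpa [hMverts, Set.ncard_eq_toFinset_card'] using hM.even_card
  obtain ⟨M', hM'verts, hM'⟩ :=
    ((G.isClique_universalVerts.subset Set.sdiff_subset).even_iff_exists_isMatching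
      (Set.toFinite _)).mp (hrest ▸ (Set.even_ncard_compl_iff heven _).mpr hMeven)
  refine ⟨M ⊔ M', hM.sup hM' ?_, ?_⟩
  · rw [hM.support_eq_verts, hM'.support_eq_verts, hMverts, hM'verts, ← hrest]
    exact disjoint_compl_right
  · rw [Subgraph.isSpanning_iff, Subgraph.verts_sup, hMverts, hM'verts, ← hrest,
      Set.union_compl_self]

theorem IsUniversal.induce {v : V} (hv : G.IsUniversal v) {s : Set V} (hs : v ∈ s) :
    (G.induce s).IsUniversal ⟨v, hs⟩ :=
  fun _ hne => hv (Subtype.val_injective.ne hne)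

end SimpleGraph

theorem indepNum_eq_simpleGraph_indepNum {W : Type*} (G : SimpleGraph W) :
    _root_.indepNum G = G.indepNum := by
  unfold _root_.indepNum SimpleGraph.indepNum
  congr! with n s
  refine ⟨fun ⟨hs, hcard⟩ => ⟨fun u hu v hv _ => hs u hu v hv, hcard⟩,
    fun ⟨hs, hcard⟩ => ⟨fun u hu v hv huv => ?_, hcard⟩⟩
  exact hs hu hv (G.ne_of_adj huv) huv

section graphJoin

variable {α β : Type*} {G : SimpleGraph α} {H : SimpleGraph β}

@[simp]
theorem graphJoin_adj_inl_inl {u v : α} : (graphJoin G H).Adj (.inl u) (.inl v) ↔ G.Adj u v := by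
  simp only [graphJoin, fromRel_adj, ne_eq, Sum.inl.injEq]
  exact ⟨fun h => h.2.elim id G.adj_symm, fun h => ⟨h.ne, .inl h⟩⟩

@[simp]
theorem graphJoin_adj_inr_inr {u v : β} : (graphJoin G H).Adj (.inr u) (.inr v) ↔ H.Adj u v := by
  simp only [graphJoin, fromRel_adj, ne_eq, Sum.inr.injEq]
  exact ⟨fun h => h.2.elim id H.adj_symm, fun h => ⟨h.ne, .inl h⟩⟩

@[simp]
theorem graphJoin_adj_inl_inr (u : α) (v : β) : (graphJoin G H).Adj (.inl u) (.inr v) := by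
  simp [graphJoin]

@[simp]
theorem graphJoin_adj_inr_inl (u : β) (v : α) : (graphJoin G H).Adj (.inr u) (.inl v) := by
  simp [graphJoin]

theorem isUniversal_graphJoin_inl {u : α} (hu : G.IsUniversal u) :
    (graphJoin G H).IsUniversal (.inl u) := by
  rintro (w | w) hne
  · exact graphJoin_adj_inl_inl.2 (hu fun h => hne (congrArg _ h))
  · exact graphJoin_adj_inl_inr u w

theorem isNFactorCritical_graphJoin_top [Finite α] [Finite β] (H : SimpleGraph β) {n : ℕ}
    (hcard : Nat.card β + n ≤ Nat.card α) (heven : Even (Nat.card α + Nat.card β - n)) :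
    IsNFactorCritical (graphJoin (⊤ : SimpleGraph α) H) n := by
  intro S hS
  let C : Set ((↑S : Set (α ⊕ β))ᶜ : Set _) := Subtype.val ⁻¹' Set.range Sum.inl
  have hCcompl : Cᶜ.ncard ≤ Nat.card β := by
    rw [← Set.ncard_image_of_injective _ Subtype.val_injective,
      ← Set.ncard_range_of_injective Sum.inr_injective]
    refine Set.ncard_le_ncard ?_
    rintro _ ⟨x, hx, rfl⟩
    simpa [C, ← Set.compl_range_inl] using hx
  have htotal : Nat.card ((↑S : Set (α ⊕ β))ᶜ : Set _) = Nat.card α + Nat.card β - n := by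
    rw [Nat.card_coe_set_eq, Set.ncard_compl, Set.ncard_coe_finset, hS, Nat.card_sum]
  have hsplit := Set.ncard_add_ncard_compl C
  refine exists_isPerfectMatching_of_subset_universalVerts (C := C) ?_ (by omega) (htotal ▸ heven)
  rintro ⟨_, hv⟩ ⟨u, rfl⟩
  exact (isUniversal_graphJoin_inl fun _ => id).induce hv

theorem SimpleGraph.IsIndepSet.card_le_of_graphJoin_top_bot [Fintype β] [Nonempty β]
    {s : Finset (α ⊕ β)}
    (hs : (graphJoin (⊤ : SimpleGraph α) (⊥ : SimpleGraph β)).IsIndepSet s) :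
    s.card ≤ Fintype.card β := by
  classical
  by_cases hleft : ∃ u, Sum.inl u ∈ s
  · obtain ⟨u, hu⟩ := hleft
    have : s ⊆ {.inl u} := fun x hx => Finset.mem_singleton.2 <| by
      by_contra hne
      refine hs hx hu hne ?_
      rcases x with x | x
      · exact graphJoin_adj_inl_inl.2 ((top_adj _ _).2 fun h => hne (congrArg _ h))
      · exact graphJoin_adj_inr_inl x u
    exact (Finset.card_le_card this).trans ((Finset.card_singleton _).trans_le Fintype.card_pos)
  · rw [not_exists] at hleft
    have : s ⊆ Finset.univ.map .inr := by
      rintro (x | x) hx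
      · exact absurd hx (hleft x)
      · simp
    simpa using Finset.card_le_card this

theorem indepNum_graphJoin_top_bot [Fintype α] [Fintype β] [Nonempty β] :
    (graphJoin (⊤ : SimpleGraph α) (⊥ : SimpleGraph β)).indepNum = Fintype.card β := by
  refine le_antisymm ?_ ?_
  · obtain ⟨s, hs, hcard⟩ :=
      (graphJoin (⊤ : SimpleGraph α) (⊥ : SimpleGraph β)).exists_isNIndepSet_indepNum
    exact hcard ▸ hs.card_le_of_graphJoin_top_bot
  · have hind : (graphJoin (⊤ : SimpleGraph α) (⊥ : SimpleGraph β)).IsIndepSet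
        (Finset.univ.map Function.Embedding.inr : Finset (α ⊕ β)) := by
      rintro _ hx _ hy -
      obtain ⟨x, -, rfl⟩ := Finset.mem_map.1 hx
      obtain ⟨y, -, rfl⟩ := Finset.mem_map.1 hy
      simp
    simpa using hind.card_le_indepNum

end graphJoin

/-- The graph K_{(ν+n)/2} ∨ ((ν−n)/2)K₁ is n-factor-critical with independence number
exactly (ν−n)/2. -/
theorem join_clique_indep_factorCritical (ν n : ℕ)
    (hpar : ν % 2 = n % 2) (hlt : n < ν) :
    IsNFactorCritical
        (graphJoin (⊤ : SimpleGraph (Fin ((ν + n) / 2)))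
          (⊥ : SimpleGraph (Fin ((ν - n) / 2)))) n ∧
      _root_.indepNum
        (graphJoin (⊤ : SimpleGraph (Fin ((ν + n) / 2)))
          (⊥ : SimpleGraph (Fin ((ν - n) / 2)))) = (ν - n) / 2 := by
  refine ⟨isNFactorCritical_graphJoin_top ⊥ (by simp only [Nat.card_fin]; omega)
    ⟨(ν - n) / 2, by simp only [Nat.card_fin]; omega⟩, ?_⟩
  have : Nonempty (Fin ((ν - n) / 2)) := ⟨⟨0, by omega⟩⟩
  rw [indepNum_eq_simpleGraph_indepNum, indepNum_graphJoin_top_bot, Fintype.card_fin]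
end

section
/- Let G be a graph on ν vertices and n a positive integer with ν ≡ n (mod 2), δ(G) ≥ (ν+n)/2 − 1, and α(G) ≤ (ν−n)/2. Then G fails to be n-factor-critical if and only if (ν−n)/2 is odd and G = G₀ ∨ (G₁ ∪ G₂), where G₀ is a graph on n vertices and G₁ = G₂ = K_{(ν−n)/2}. -/
open SimpleGraph

/-!
Deleting a set `S` of `n` vertices leaves a graph `H` on `2m` vertices, `m = (ν - n) / 2`, with
`δ(H) ≥ m - 1` and `α(H) ≤ m`. If `H` has no perfect matching, Tutte's theorem gives a set `U`
whose deletion leaves `q > |U|` odd components, and `q ≥ |U| + 2` by parity. One vertex from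
each odd component gives an independent set, so `q ≤ m`; a vertex of an odd component `C` has
all its neighbours in `C ∪ U`, so `|C| ≥ m - |U|`, and counting vertices gives
`q (m - |U|) ≤ 2m - |U|`, which forces `U = ∅`. An odd component `A` of `H` is then closed under
adjacency, so the degree bound makes `A` and its complement cliques on `m` vertices, and
`m = |A|` is odd. Back in `G`, every vertex of `H` has at most `m - 1` neighbours in `H`, so the
degree bound joins it to all of `S`. Conversely, a perfect matching of `G - S = K_m ∪ K_m` would
match the odd clique within itself.
-/

lemma eq_zero_of_mul_sub_le {k q m : ℕ} (hkq : k + 2 ≤ q) (hqm : q ≤ m)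
    (h : q * (m - k) ≤ 2 * m - k) : k = 0 := by
  obtain ⟨j, rfl⟩ : ∃ j, m = k + j := ⟨m - k, by omega⟩
  rw [Nat.add_sub_cancel_left] at h
  have h' : q * j ≤ k + 2 * j := by omega
  nlinarith

namespace SimpleGraph

variable {W : Type*} {H : SimpleGraph W}

lemma forall_neighborSet_subset_compl {A : Set W} (hA : ∀ a ∈ A, H.neighborSet a ⊆ A) :
    ∀ b ∈ Aᶜ, H.neighborSet b ⊆ Aᶜ :=
  fun _ hb _ hc hcA => hb (hA _ hcA (H.adj_symm hc))

section Degree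

variable [Fintype W] [DecidableRel H.Adj]

lemma ncard_neighborSet_eq_degree (a : W) : (H.neighborSet a).ncard = H.degree a := by
  rw [Set.ncard_eq_toFinset_card', Set.toFinset_card, card_neighborSet_eq_degree]

lemma ncard_insert_neighborSet (a : W) : (insert a (H.neighborSet a)).ncard = H.degree a + 1 := by
  rw [Set.ncard_insert_of_notMem H.notMem_neighborSet_self, ncard_neighborSet_eq_degree]

lemma degree_lt_ncard {s : Set W} {a : W} (ha : a ∈ s) (hs : H.neighborSet a ⊆ s) :
    H.degree a < s.ncard := by
  rw [Nat.lt_iff_add_one_le, ← ncard_insert_neighborSet]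
  exact Set.ncard_le_ncard (Set.insert_subset ha hs)

lemma isClique_of_ncard_le_degree_add_one {s : Set W} (hs : ∀ a ∈ s, H.neighborSet a ⊆ s)
    (hdeg : ∀ a ∈ s, s.ncard ≤ H.degree a + 1) : H.IsClique s := by
  intro a ha b hb hab
  have hfill : insert a (H.neighborSet a) = s := Set.eq_of_subset_of_ncard_le
    (Set.insert_subset ha (hs a ha)) (by rw [ncard_insert_neighborSet]; exact hdeg a ha)
  rw [← hfill] at hb
  exact hb.resolve_left hab.symm

lemma ncard_eq_and_isClique_of_neighborSet_subset {m : ℕ} (hcard : Nat.card W = 2 * m)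
    (hdeg : ∀ w, m - 1 ≤ H.degree w) {A : Set W} (hA : ∀ a ∈ A, H.neighborSet a ⊆ A)
    (hne : A.Nonempty) (hne' : Aᶜ.Nonempty) :
    A.ncard = m ∧ H.IsClique A ∧ H.IsClique Aᶜ := by
  have hAc := forall_neighborSet_subset_compl hA
  obtain ⟨a, ha⟩ := hne
  obtain ⟨b, hb⟩ := hne'
  have hsum := Set.ncard_add_ncard_compl A
  have := degree_lt_ncard ha (hA a ha)
  have := degree_lt_ncard hb (hAc b hb)
  have := hdeg a
  have := hdeg b
  have hAm : A.ncard = m := by omega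
  have hAcm : Aᶜ.ncard = m := by omega
  exact ⟨hAm, isClique_of_ncard_le_degree_add_one hA fun x _ => by have := hdeg x; omega,
    isClique_of_ncard_le_degree_add_one hAc fun x _ => by have := hdeg x; omega⟩

end Degree

lemma mul_ncard_le_card_of_le_ncard_supp {V : Type*} [Finite V] {G : SimpleGraph V}
    {C : Set G.ConnectedComponent} {n : ℕ} (h : ∀ c ∈ C, n ≤ c.supp.ncard) :
    n * C.ncard ≤ Nat.card V := by
  classical
  have := Fintype.ofFinite V
  have := Fintype.ofFinite G.ConnectedComponent
  rw [Set.ncard_eq_toFinset_card', Nat.card_eq_fintype_card]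
  refine (Finset.mul_card_image_le_card_of_maps_to (f := G.connectedComponentMk)
    (s := Finset.univ.filter fun v => G.connectedComponentMk v ∈ C) (by simp) n
    fun c hc => ?_).trans (Finset.card_filter_le _ _)
  convert h c (by simpa using hc) using 1
  rw [Set.ncard_eq_toFinset_card']
  congr 1
  ext v
  simp only [Finset.mem_filter, Finset.mem_univ, true_and, Set.mem_toFinset,
    ConnectedComponent.mem_supp_iff]
  constructor
  · exact fun h => h.2
  · rintro rfl; exact ⟨by simpa using hc, rfl⟩

section Tutte

variable {u : Set W}

lemma neighborSet_subset_union_image_supp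
    (c : ((⊤ : H.Subgraph).deleteVerts u).coe.ConnectedComponent) {x} (hx : x ∈ c.supp) :
    H.neighborSet x.1 ⊆ u ∪ Subtype.val '' c.supp := by
  intro y hy
  by_cases hyu : y ∈ u
  · exact Or.inl hyu
  · refine Or.inr ⟨⟨y, by simp [hyu]⟩, ?_, rfl⟩
    rw [ConnectedComponent.mem_supp_iff] at hx ⊢
    rw [← hx]
    exact (ConnectedComponent.connectedComponentMk_eq_of_adj
      (by simpa using ⟨x.2.2, hyu, hy⟩)).symm

lemma degree_lt_ncard_add_ncard_supp [Fintype W] [DecidableRel H.Adj]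
    (c : ((⊤ : H.Subgraph).deleteVerts u).coe.ConnectedComponent) {x} (hx : x ∈ c.supp) :
    H.degree x.1 < u.ncard + c.supp.ncard :=
  calc H.degree x.1 < (u ∪ Subtype.val '' c.supp).ncard :=
        degree_lt_ncard (Or.inr ⟨x, hx, rfl⟩) (neighborSet_subset_union_image_supp c hx)
    _ ≤ u.ncard + (Subtype.val '' c.supp).ncard := Set.ncard_union_le _ _
    _ = u.ncard + c.supp.ncard := by rw [Set.ncard_image_of_injective _ Subtype.val_injective]

lemma exists_isIndepSet_ncard_eq_ncard_oddComponents :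
    ∃ s : Set W, H.IsIndepSet s ∧
      s.ncard = ((⊤ : H.Subgraph).deleteVerts u).coe.oddComponents.ncard := by
  have hrep := ConnectedComponent.Represents.image_out
    ((⊤ : H.Subgraph).deleteVerts u).coe.oddComponents
  refine ⟨Subtype.val '' (Quot.out '' _), ?_,
    (Set.ncard_image_of_injective _ Subtype.val_injective).trans hrep.ncard_eq⟩
  rintro _ ⟨x, hx, rfl⟩ _ ⟨y, hy, rfl⟩ hne hadj
  exact hne (congrArg Subtype.val (hrep.injOn hx hy
    (ConnectedComponent.connectedComponentMk_eq_of_adj (by simpa using ⟨x.2.2, y.2.2, hadj⟩))))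

end Tutte

lemma IsTutteViolator.eq_empty [Fintype W] [DecidableRel H.Adj] {m : ℕ} {u : Set W}
    (hu : H.IsTutteViolator u) (hcard : Nat.card W = 2 * m) (hdeg : ∀ w, m - 1 ≤ H.degree w)
    (hα : ∀ s, H.IsIndepSet s → s.ncard ≤ m) : u = ∅ := by
  rw [IsTutteViolator] at hu
  set K := ((⊤ : H.Subgraph).deleteVerts u).coe
  have hKcard : Nat.card ((⊤ : H.Subgraph).deleteVerts u).verts = 2 * m - u.ncard := by
    rw [Nat.card_coe_set_eq, Subgraph.deleteVerts_verts, Subgraph.verts_top,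
      Set.ncard_sdiff (Set.subset_univ u), Set.ncard_univ, hcard]
  have hparity := K.odd_ncard_oddComponents
  rw [hKcard, Nat.odd_iff, Nat.odd_iff] at hparity
  have hk : u.ncard ≤ 2 * m := hcard ▸ Set.ncard_le_card u
  obtain ⟨s, hs, hscard⟩ := exists_isIndepSet_ncard_eq_ncard_oddComponents (H := H) (u := u)
  have hsize (c : K.ConnectedComponent) (_ : c ∈ K.oddComponents) :
      m - u.ncard ≤ c.supp.ncard := by
    obtain ⟨x, hx⟩ := c.nonempty_supp
    have := degree_lt_ncard_add_ncard_supp c hx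
    have := hdeg x.1
    omega
  have hcount := mul_comm (m - u.ncard) _ ▸ hKcard ▸ mul_ncard_le_card_of_le_ncard_supp hsize
  rw [← Set.ncard_eq_zero]
  exact eq_zero_of_mul_sub_le (q := K.oddComponents.ncard) (by omega) (hscard ▸ hα s hs) hcount

theorem IsMatchingFree.exists_isClique_isClique_compl [Fintype W] [DecidableRel H.Adj] {m : ℕ}
    (hH : H.IsMatchingFree) (hcard : Nat.card W = 2 * m) (hdeg : ∀ w, m - 1 ≤ H.degree w)
    (hα : ∀ s, H.IsIndepSet s → s.ncard ≤ m) :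
    Odd m ∧ ∃ A : Set W, A.ncard = m ∧ H.IsClique A ∧ H.IsClique Aᶜ ∧
      ∀ a ∈ A, H.neighborSet a ⊆ A := by
  obtain ⟨u, hu⟩ := exists_isTutteViolator hH (hcard ▸ even_two_mul m)
  obtain rfl := hu.eq_empty hcard hdeg hα
  obtain ⟨c, hc⟩ : ((⊤ : H.Subgraph).deleteVerts ∅).coe.oddComponents.Nonempty :=
    Set.nonempty_of_ncard_ne_zero (by rw [IsTutteViolator, Set.ncard_empty] at hu; omega)
  set A := Subtype.val '' c.supp
  have hA : ∀ a ∈ A, H.neighborSet a ⊆ A := by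
    rintro _ ⟨x, hx, rfl⟩
    simpa using neighborSet_subset_union_image_supp c hx
  have hAodd : Odd A.ncard := by rwa [Set.ncard_image_of_injective _ Subtype.val_injective]
  have hAc : Aᶜ.Nonempty := by
    rw [Set.nonempty_compl]
    rintro hAuniv
    rw [hAuniv, Set.ncard_univ, hcard] at hAodd
    exact Nat.not_odd_iff_even.2 (even_two_mul m) hAodd
  obtain ⟨hAm, hAcl, hAccl⟩ :=
    ncard_eq_and_isClique_of_neighborSet_subset hcard hdeg hA (c.nonempty_supp.image _) hAc
  exact ⟨hAm ▸ hAodd, A, hAm, hAcl, hAccl, hA⟩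

section Induce

variable {V : Type*} {G : SimpleGraph V}

lemma degree_eq_ncard_inter_compl_add_degree_induce [Fintype V] [DecidableRel G.Adj] {s : Set V}
    [DecidablePred (· ∈ s)] (v : s) :
    G.degree v = (G.neighborSet v ∩ sᶜ).ncard + (G.induce s).degree v := by
  rw [← ncard_neighborSet_eq_degree, ← ncard_neighborSet_eq_degree, neighborSet_induce,
    ← Set.ncard_image_of_injective _ Subtype.val_injective, Set.image_preimage_eq_inter_range,
    Subtype.range_coe, ← Set.sdiff_eq, add_comm, Set.ncard_inter_add_ncard_sdiff_eq_ncard]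

lemma degree_le_degree_induce_add_ncard_compl [Fintype V] [DecidableRel G.Adj] {s : Set V}
    [DecidablePred (· ∈ s)] (v : s) : G.degree v ≤ (G.induce s).degree v + sᶜ.ncard := by
  rw [degree_eq_ncard_inter_compl_add_degree_induce, add_comm]
  exact Nat.add_le_add_left (Set.ncard_le_ncard Set.inter_subset_right) _

lemma compl_subset_neighborSet_of_le_degree [Fintype V] [DecidableRel G.Adj] {s : Set V}
    [DecidablePred (· ∈ s)] (v : s) (h : sᶜ.ncard + (G.induce s).degree v ≤ G.degree v) :
    sᶜ ⊆ G.neighborSet v := by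
  rw [degree_eq_ncard_inter_compl_add_degree_induce, Nat.add_le_add_iff_right] at h
  rw [← Set.eq_of_subset_of_ncard_le Set.inter_subset_right h]
  exact Set.inter_subset_left

lemma IsIndepSet.ncard_le_indepNum [Fintype V] {s : Set V} (hs : G.IsIndepSet s) :
    s.ncard ≤ _root_.indepNum G := by
  classical
  refine le_csSup ⟨Fintype.card V, ?_⟩
    ⟨s.toFinset, fun u hu v hv huv => ?_, (Set.ncard_eq_toFinset_card' s).symm⟩
  · rintro _ ⟨t, -, rfl⟩
    exact t.card_le_univ
  · rw [Set.mem_toFinset] at hu hv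
    exact hs hu hv huv.ne huv

end Induce

lemma Subgraph.IsPerfectMatching.even_ncard_of_forall_neighborSet_subset [Finite W]
    {M : H.Subgraph} (hM : M.IsPerfectMatching) {s : Set W}
    (hs : ∀ a ∈ s, H.neighborSet a ⊆ s) : Even s.ncard := by
  classical
  have := Fintype.ofFinite W
  have hmatch : (M.induce s).IsMatching := by
    intro v hv
    obtain ⟨w, hvw, huniq⟩ := hM.1 (hM.2 v)
    exact ⟨w, ⟨hv, hs v hv (M.adj_sub hvw), hvw⟩, fun y hy => huniq y hy.2.2⟩
  simpa [Set.ncard_eq_toFinset_card'] using hmatch.even_card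

end SimpleGraph

section FactorCritical

variable {V : Type*} [Fintype V] [DecidableEq V] {G : SimpleGraph V}

lemma isJoinTwoCliques_of_induce_compl {m : ℕ} (S : Finset V) {A : Set ↥(↑S : Set V)ᶜ}
    (hAm : A.ncard = m) (hAcm : Aᶜ.ncard = m) (hAcl : (G.induce (↑S : Set V)ᶜ).IsClique A)
    (hAccl : (G.induce (↑S : Set V)ᶜ).IsClique Aᶜ)
    (hA : ∀ a ∈ A, (G.induce (↑S : Set V)ᶜ).neighborSet a ⊆ A)
    (hjoin : ∀ x ∈ S, ∀ w : ↥(↑S : Set V)ᶜ, G.Adj x w) :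
    IsJoinTwoCliques G S.card m := by
  classical
  -- Generic in the `Fintype` instance, so as to match the ones chosen for `A` and `Aᶜ` below.
  have hcard (B : Set ↥(↑S : Set V)ᶜ) [Fintype ↑(Subtype.val '' B)] :
      (Subtype.val '' B).toFinset.card = B.ncard := by
    rw [← Set.ncard_eq_toFinset_card', Set.ncard_image_of_injective _ Subtype.val_injective]
  have hclique {B : Set ↥(↑S : Set V)ᶜ} [Fintype ↑(Subtype.val '' B)]
      (hB : (G.induce (↑S : Set V)ᶜ).IsClique B) :
      ∀ u ∈ (Subtype.val '' B).toFinset, ∀ v ∈ (Subtype.val '' B).toFinset, u ≠ v →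
        G.Adj u v :=
    fun u hu v hv => isClique_induce_iff.1 hB (Set.mem_toFinset.1 hu) (Set.mem_toFinset.1 hv)
  refine ⟨S, (Subtype.val '' A).toFinset, (Subtype.val '' Aᶜ).toFinset, ?_, ?_, ?_, ?_, rfl,
    (hcard A).trans hAm, (hcard Aᶜ).trans hAcm, hclique hAcl, hclique hAccl, ?_, ?_⟩
  · exact Finset.disjoint_left.2 fun x hx => by simp [hx]
  · exact Finset.disjoint_left.2 fun x hx => by simp [hx]
  · exact Set.disjoint_toFinset.2
      ((Set.disjoint_image_iff Subtype.val_injective).2 disjoint_compl_right)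
  · ext x
    by_cases hx : x ∈ S
    · simp [hx]
    · by_cases hxA : (⟨x, hx⟩ : ↥(↑S : Set V)ᶜ) ∈ A <;> simp [hx, hxA]
  · simp only [Set.mem_toFinset, Set.mem_image]
    rintro _ ⟨a, ha, rfl⟩ _ ⟨b, hb, rfl⟩ hab
    exact hb (hA a ha hab)
  · simp only [Finset.mem_union, Set.mem_toFinset, Set.mem_image]
    rintro x hx _ (⟨w, -, rfl⟩ | ⟨w, -, rfl⟩) <;> exact hjoin x hx w

theorem isJoinTwoCliques_of_not_isNFactorCritical [DecidableRel G.Adj] {n m : ℕ}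
    (hcard : Fintype.card V = n + 2 * m) (hdeg : ∀ v, n + m - 1 ≤ G.degree v)
    (hα : _root_.indepNum G ≤ m) (h : ¬ IsNFactorCritical G n) :
    Odd m ∧ IsJoinTwoCliques G n m := by
  obtain ⟨S, rfl, hfree⟩ :
      ∃ S : Finset V, S.card = n ∧ (G.induce (↑S : Set V)ᶜ).IsMatchingFree := by
    simpa [IsNFactorCritical, HasPM, IsMatchingFree] using h
  have hScard : (↑S : Set V)ᶜᶜ.ncard = S.card := by rw [compl_compl, Set.ncard_coe_finset]
  have hHcard : Nat.card ↥(↑S : Set V)ᶜ = 2 * m := by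
    have := Set.ncard_add_ncard_compl (↑S : Set V)
    rw [Set.ncard_coe_finset, Nat.card_eq_fintype_card] at this
    rw [Nat.card_coe_set_eq]
    omega
  have hHdeg (w : ↥(↑S : Set V)ᶜ) : m - 1 ≤ (G.induce (↑S : Set V)ᶜ).degree w := by
    have := degree_le_degree_induce_add_ncard_compl (G := G) w
    have := hdeg w
    omega
  have hHα (s : Set ↥(↑S : Set V)ᶜ) (hs : (G.induce (↑S : Set V)ᶜ).IsIndepSet s) :
      s.ncard ≤ m := by
    have hGs : G.IsIndepSet (Subtype.val '' s) := by
      rintro _ ⟨x, hx, rfl⟩ _ ⟨y, hy, rfl⟩ hne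
      exact hs hx hy (ne_of_apply_ne _ hne)
    rw [← Set.ncard_image_of_injective s Subtype.val_injective]
    exact hGs.ncard_le_indepNum.trans hα
  obtain ⟨hodd, A, hAm, hAcl, hAccl, hA⟩ :=
    hfree.exists_isClique_isClique_compl hHcard hHdeg hHα
  have hAcm : Aᶜ.ncard = m := by
    have := Set.ncard_add_ncard_compl A
    omega
  have hjoin (x) (hx : x ∈ S) (w : ↥(↑S : Set V)ᶜ) : G.Adj x w := by
    have hlt : (G.induce (↑S : Set V)ᶜ).degree w < m := by
      by_cases hw : w ∈ A
      · exact hAm ▸ degree_lt_ncard hw (hA w hw)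
      · exact hAcm ▸ degree_lt_ncard hw (forall_neighborSet_subset_compl hA w hw)
    have := hdeg w
    exact (compl_subset_neighborSet_of_le_degree w (by omega) (by simpa using hx)).symm
  exact ⟨hodd, isJoinTwoCliques_of_induce_compl S hAm hAcm hAcl hAccl hA hjoin⟩

theorem not_isNFactorCritical_of_isJoinTwoCliques {n m : ℕ} (hm : Odd m)
    (h : IsJoinTwoCliques G n m) : ¬ IsNFactorCritical G n := by
  obtain ⟨S, A, B, hSA, -, -, hcover, hS, hA, -, -, -, hAB, -⟩ := h
  intro hcrit
  obtain ⟨M, hM⟩ := hcrit S hS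
  have hclosed : ∀ a ∈ Subtype.val ⁻¹' (↑A : Set V),
      (G.induce (↑S : Set V)ᶜ).neighborSet a ⊆ Subtype.val ⁻¹' (↑A : Set V) := by
    intro a ha b hab
    have hb : b.1 ∈ S ∪ A ∪ B := hcover ▸ Finset.mem_univ _
    simp only [Finset.mem_union] at hb
    rcases hb with (hbS | hbA) | hbB
    · exact absurd hbS b.2
    · exact hbA
    · exact absurd hab (hAB a ha b hbB)
  have hAeven := hM.even_ncard_of_forall_neighborSet_subset hclosed
  have hAcard : (Subtype.val ⁻¹' (↑A : Set V) : Set ↥(↑S : Set V)ᶜ).ncard = m := by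
    refine (Set.ncard_preimage_of_injective_subset_range Subtype.val_injective
      (fun x hx => ⟨⟨x, Finset.disjoint_right.1 hSA hx⟩, rfl⟩)).trans ?_
    rw [Set.ncard_coe_finset, hA]
  rw [hAcard] at hAeven
  exact Nat.not_odd_iff_even.2 hAeven hm

end FactorCritical

theorem not_factorCritical_iff_joinTwoCliques_general {V : Type*} [Fintype V] [DecidableEq V]
    (G : SimpleGraph V) [DecidableRel G.Adj] (n : ℕ)
    (hpar : Fintype.card V % 2 = n % 2)
    (hdeg : (Fintype.card V + n) / 2 - 1 ≤ G.minDegree)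
    (hα : _root_.indepNum G ≤ (Fintype.card V - n) / 2) :
    ¬ IsNFactorCritical G n ↔
      (Odd ((Fintype.card V - n) / 2) ∧
        IsJoinTwoCliques G n ((Fintype.card V - n) / 2)) := by
  refine ⟨fun h => ?_, fun ⟨hodd, hjoin⟩ =>
    not_isNFactorCritical_of_isJoinTwoCliques hodd hjoin⟩
  have hn : n ≤ Fintype.card V := by
    by_contra hlt
    exact h fun S hS => absurd (hS ▸ S.card_le_univ) hlt
  exact isJoinTwoCliques_of_not_isNFactorCritical (by omega)
    (fun v => le_trans (by omega) (hdeg.trans (G.minDegree_le_degree v))) hα h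

/-- With ν ≡ n (mod 2), δ(G) ≥ (ν+n)/2 − 1 and α(G) ≤ (ν−n)/2: G fails to be
n-factor-critical iff (ν−n)/2 is odd and G = G₀ ∨ (K_{(ν−n)/2} ∪ K_{(ν−n)/2}) with
|V(G₀)| = n. -/
theorem not_factorCritical_iff_joinTwoCliques {V : Type*} [Fintype V] [DecidableEq V]
    (G : SimpleGraph V) [DecidableRel G.Adj] (n : ℕ)
    (hpos : 0 < n) (hpar : Fintype.card V % 2 = n % 2)
    (hdeg : (Fintype.card V + n) / 2 - 1 ≤ G.minDegree)
    (hα : _root_.indepNum G ≤ (Fintype.card V - n) / 2) :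
    ¬ IsNFactorCritical G n ↔
      (Odd ((Fintype.card V - n) / 2) ∧
        IsJoinTwoCliques G n ((Fintype.card V - n) / 2)) :=
  not_factorCritical_iff_joinTwoCliques_general G n hpar hdeg hα
end

section
/- Let G be a graph on ν vertices and n a positive integer with ν ≡ n (mod 2) and δ(G) ≥ (ν+n)/2 − 1. Suppose G cannot be expressed as G₀ ∨ (G₁ ∪ G₂) with (ν−n)/2 odd, |V(G₀)| = n, and G₁ = G₂ = K_{(ν−n)/2}. Then G is n-factor-critical if and only if α(G) ≤ (ν−n)/2. -/
open SimpleGraph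

/-!
Delete a set `S` of `n` vertices and let `H = G - S`, a graph on `2k` vertices, `k = (ν - n)/2`,
of minimum degree at least `k - 1`. If `α(G) ≤ k` but `H` has no perfect matching, Tutte's theorem
gives a set `U` such that `H - U` has at least `|U| + 2` odd components (by parity). One vertex from
each of them gives an independent set, so there are at most `k` of them, while the degree bound
gives each at least `k - |U|` vertices; counting vertices forces `U = ∅`. An odd component `A` of
`H` and its complement then both have exactly `k` vertices and are cliques, and the degree bound
joins every vertex of `S` to all of `H`: `G` is the excluded graph.
Conversely, a perfect matching of `G - S` sends an independent set outside `S` injectively into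
its complement, which bounds `α(G)` by `k`.
-/

open Finset

theorem indepNum_eq_indepNum {V : Type*} (G : SimpleGraph V) :
    _root_.indepNum G = G.indepNum := by
  unfold _root_.indepNum SimpleGraph.indepNum
  congr! with m s
  rw [isNIndepSet_iff, isIndepSet_iff]
  refine and_congr_left' ⟨fun h a ha b hb _ => h a ha b hb, fun h a ha b hb hab => ?_⟩
  obtain rfl | hne := eq_or_ne a b
  · exact hab.ne rfl
  · exact h ha hb hne hab

namespace SimpleGraph

variable {V : Type*} {G : SimpleGraph V}

theorem isIndepSet_subtype_induce {s : Set V} [DecidablePred (· ∈ s)] {t : Finset V}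
    (ht : G.IsIndepSet t) : (G.induce s).IsIndepSet (t.subtype (· ∈ s)) := by
  intro x hx y hy hxy
  simp only [mem_coe, mem_subtype] at hx hy
  simpa using ht hx hy (Subtype.coe_injective.ne hxy)

section Matching

variable [Fintype V] [DecidableEq V]

theorem Subgraph.IsPerfectMatching.two_mul_card_le_of_isIndepSet {M : G.Subgraph}
    (hM : M.IsPerfectMatching) {t : Finset V} (ht : G.IsIndepSet t) :
    2 * #t ≤ Fintype.card V := by
  choose p hp hpu using Subgraph.isPerfectMatching_iff.mp hM
  have hinj : Function.Injective p := fun a b hab =>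
    (hpu (p a) a (hp a).symm).trans (hpu (p a) b (hab ▸ (hp b).symm)).symm
  have hdisj : Disjoint t (t.image p) := by
    refine disjoint_right.mpr ?_
    rintro _ hb ha
    obtain ⟨a, ha', rfl⟩ := mem_image.mp hb
    exact ht ha' ha (M.adj_sub (hp a)).ne (M.adj_sub (hp a))
  calc 2 * #t = #(t ∪ t.image p) := by
        rw [card_union_of_disjoint hdisj, card_image_of_injective _ hinj]; ring
    _ ≤ Fintype.card V := card_le_univ _

theorem _root_.IsNFactorCritical.two_mul_indepNum_le {n : ℕ} (hG : IsNFactorCritical G n)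
    (hn : n < Fintype.card V) : 2 * G.indepNum ≤ Fintype.card V - n := by
  obtain ⟨t, ht⟩ := G.exists_isNIndepSet_indepNum
  obtain ⟨S, hS, hSt⟩ : ∃ S : Finset V, #S = n ∧ (Disjoint S t ∨ tᶜ ⊆ S) := by
    by_cases h : n ≤ #tᶜ
    · obtain ⟨S, hsub, hcard⟩ := exists_subset_card_eq h
      exact ⟨S, hcard, .inl (disjoint_of_subset_left hsub disjoint_compl_left)⟩
    · obtain ⟨S, hsub, -, hcard⟩ :=
        exists_subsuperset_card_eq (n := n) (subset_univ tᶜ) (by omega) (by simp; omega)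
      exact ⟨S, hcard, .inr hsub⟩
  obtain ⟨M, hM⟩ := hG S hS
  have hmatch := hM.two_mul_card_le_of_isIndepSet (isIndepSet_subtype_induce ht.isIndepSet)
  rw [card_subtype, Fintype.card_compl_set] at hmatch
  simp only [SetLike.coe_sort_coe, Fintype.card_coe, hS] at hmatch
  rcases hSt with hd | hsub
  · rwa [filter_true_of_mem fun x hx => by simpa using disjoint_right.mp hd hx, ht.card_eq]
      at hmatch
  · have : {x ∈ t | x ∈ (↑S : Set V)ᶜ} = Sᶜ := by
      ext x
      simp only [mem_filter, Set.mem_compl_iff, mem_coe, mem_compl]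
      exact ⟨And.right, fun hx => ⟨by_contra fun hxt => hx (hsub (mem_compl.mpr hxt)), hx⟩⟩
    rw [this, card_compl, hS] at hmatch
    omega

end Matching

section Components

variable {u : Set V}

theorem coe_deleteVerts_top_adj {x y : ((⊤ : G.Subgraph).deleteVerts u).verts} :
    ((⊤ : G.Subgraph).deleteVerts u).coe.Adj x y ↔ G.Adj x y := by
  have hx := x.2
  have hy := y.2
  simp_all

theorem neighborSet_subset_image_supp_union
    {C : ((⊤ : G.Subgraph).deleteVerts u).coe.ConnectedComponent} {x} (hx : x ∈ C.supp) :
    G.neighborSet x ⊆ Subtype.val '' C.supp ∪ u := by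
  intro y hy
  by_cases hyu : y ∈ u
  · exact .inr hyu
  refine .inl ⟨⟨y, by simp [hyu]⟩, ?_, rfl⟩
  rw [ConnectedComponent.mem_supp_iff] at hx ⊢
  rw [← hx, ConnectedComponent.eq]
  exact Adj.reachable (coe_deleteVerts_top_adj.mpr hy.symm)

theorem minDegree_lt_ncard_supp_add [Fintype V] [DecidableRel G.Adj]
    (C : ((⊤ : G.Subgraph).deleteVerts u).coe.ConnectedComponent) :
    G.minDegree < C.supp.ncard + u.ncard := by
  obtain ⟨x, hx⟩ := C.nonempty_supp
  have hsub : insert (x : V) (G.neighborSet x) ⊆ Subtype.val '' C.supp ∪ u :=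
    Set.insert_subset (.inl ⟨x, hx, rfl⟩) (neighborSet_subset_image_supp_union hx)
  calc G.minDegree < G.degree x + 1 := Nat.lt_succ_of_le (G.minDegree_le_degree x)
    _ = (insert (x : V) (G.neighborSet x)).ncard := by
        rw [Set.ncard_insert_of_notMem G.notMem_neighborSet_self, ← Nat.card_coe_set_eq,
          Nat.card_eq_fintype_card, card_neighborSet_eq_degree]
    _ ≤ (Subtype.val '' C.supp ∪ u).ncard := Set.ncard_le_ncard hsub
    _ ≤ C.supp.ncard + u.ncard := by
        grw [Set.ncard_union_le, Set.ncard_image_of_injective _ Subtype.val_injective]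

theorem ncard_oddComponents_le_indepNum [Finite V] :
    ((⊤ : G.Subgraph).deleteVerts u).coe.oddComponents.ncard ≤ G.indepNum := by
  classical
  set K := ((⊤ : G.Subgraph).deleteVerts u).coe
  let rep : K.ConnectedComponent → V := fun C => C.out
  have hinj : Function.Injective rep := fun C D h => by
    rw [← C.out_eq, ← D.out_eq]
    exact congrArg _ (Subtype.val_injective h)
  have hind : G.IsIndepSet (rep '' K.oddComponents) := by
    rintro _ ⟨C, -, rfl⟩ _ ⟨D, -, rfl⟩ hne hadj
    refine hne (congrArg rep ?_)
    rw [← C.out_eq, ← D.out_eq]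
    exact ConnectedComponent.connectedComponentMk_eq_of_adj (coe_deleteVerts_top_adj.mpr hadj)
  have := Fintype.ofFinite V
  calc K.oddComponents.ncard = (rep '' K.oddComponents).ncard :=
        (Set.ncard_image_of_injective _ hinj).symm
    _ = #(rep '' K.oddComponents).toFinset := Set.ncard_eq_toFinset_card' _
    _ ≤ G.indepNum := IsIndepSet.card_le_indepNum (by simpa using hind)

theorem mul_card_connectedComponent_le [Finite V] {m : ℕ}
    (h : ∀ C : G.ConnectedComponent, m ≤ C.supp.ncard) :
    m * Nat.card G.ConnectedComponent ≤ Nat.card V := by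
  classical
  have := Fintype.ofFinite V
  rw [Nat.card_eq_fintype_card, Nat.card_eq_fintype_card, ← card_univ, ← card_univ]
  refine mul_card_image_le_card_of_maps_to (f := G.connectedComponentMk)
    (fun _ _ => mem_univ _) m fun C _ => (h C).trans_eq ?_
  rw [Set.ncard_eq_toFinset_card']
  congr 1
  ext v
  simp [ConnectedComponent.mem_supp_iff]

theorem ncard_verts_deleteVerts_top_add [Finite V] (u : Set V) :
    Nat.card ((⊤ : G.Subgraph).deleteVerts u).verts + u.ncard = Nat.card V := by
  rw [Nat.card_coe_set_eq, Subgraph.deleteVerts_verts, Subgraph.verts_top,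
    ← Set.compl_eq_univ_sdiff, add_comm, Set.ncard_add_ncard_compl]

theorem IsTutteViolator.ncard_add_two_le [Finite V] (h : G.IsTutteViolator u)
    (heven : Even (Nat.card V)) :
    u.ncard + 2 ≤ ((⊤ : G.Subgraph).deleteVerts u).coe.oddComponents.ncard := by
  have hpar := odd_ncard_oddComponents (G := ((⊤ : G.Subgraph).deleteVerts u).coe)
  have hcard := ncard_verts_deleteVerts_top_add (G := G) u
  rw [Nat.even_iff] at heven
  rw [Nat.odd_iff, Nat.odd_iff] at hpar
  unfold IsTutteViolator at h
  omega

theorem IsTutteViolator.eq_empty_s11 [Fintype V] [DecidableRel G.Adj] {k : ℕ}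
    (h : G.IsTutteViolator u) (hcard : Fintype.card V = 2 * k) (hdeg : k - 1 ≤ G.minDegree)
    (hind : G.indepNum ≤ k) : u = ∅ := by
  let K := ((⊤ : G.Subgraph).deleteVerts u).coe
  have hV : Nat.card V = 2 * k := Nat.card_eq_fintype_card.trans hcard
  have htwo : u.ncard + 2 ≤ K.oddComponents.ncard := h.ncard_add_two_le (hV ▸ even_two_mul k)
  have hodd : K.oddComponents.ncard ≤ k := ncard_oddComponents_le_indepNum.trans hind
  have hle : K.oddComponents.ncard ≤ Nat.card K.ConnectedComponent := Set.ncard_le_card _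
  have hcomp : (k - u.ncard) * Nat.card K.ConnectedComponent ≤ 2 * k - u.ncard := by
    rw [← hV, ← ncard_verts_deleteVerts_top_add (G := G) u, Nat.add_sub_cancel]
    refine mul_card_connectedComponent_le (m := k - u.ncard) fun C => ?_
    have := minDegree_lt_ncard_supp_add C
    omega
  -- with `b = k - |u| ≥ 2`: `b (|u| + 2) ≤ |u| + 2b` forces `|u| = 0`
  obtain ⟨b, rfl⟩ : ∃ b, k = u.ncard + b := ⟨k - u.ncard, by omega⟩
  have hb : 2 ≤ b := by omega
  rw [Nat.add_sub_cancel_left, show 2 * (u.ncard + b) - u.ncard = u.ncard + 2 * b by omega]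
    at hcomp
  have : u.ncard = 0 := by nlinarith [Nat.mul_le_mul_left b (htwo.trans hle)]
  exact (Set.ncard_eq_zero (s := u)).mp this

end Components

section TwoCliques

variable [Fintype V] [DecidableRel G.Adj] {A : Finset V}

theorem minDegree_lt_card_of_neighborFinset_subset (hA : ∀ a ∈ A, G.neighborFinset a ⊆ A)
    (hne : A.Nonempty) : G.minDegree < #A := by
  obtain ⟨a, ha⟩ := hne
  calc G.minDegree ≤ #(G.neighborFinset a) := G.minDegree_le_degree a
    _ < #A := card_lt_card <|
        (ssubset_iff_of_subset (hA a ha)).mpr ⟨a, ha, G.notMem_neighborFinset_self a⟩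

variable [DecidableEq V]

theorem isClique_of_neighborFinset_subset (hA : ∀ a ∈ A, G.neighborFinset a ⊆ A)
    (hcard : #A ≤ G.minDegree + 1) : G.IsClique (A : Set V) := by
  intro a ha b hb hab
  have hsub : G.neighborFinset a ⊆ A.erase a :=
    fun c hc => mem_erase.mpr
      ⟨(G.ne_of_adj ((G.mem_neighborFinset a c).mp hc)).symm, hA a ha hc⟩
  have heq : G.neighborFinset a = A.erase a := eq_of_subset_of_card_le hsub <| by
    rw [card_erase_of_mem ha, card_neighborFinset_eq_degree]
    have := G.minDegree_le_degree a
    omega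
  exact (G.mem_neighborFinset a b).mp (heq ▸ mem_erase.mpr ⟨hab.symm, hb⟩)

theorem card_eq_and_isClique_of_odd_card {k : ℕ} (hcard : Fintype.card V = 2 * k)
    (hdeg : k - 1 ≤ G.minDegree) (hA : ∀ a ∈ A, G.neighborFinset a ⊆ A) (hodd : Odd #A) :
    #A = k ∧ G.IsClique (A : Set V) ∧ G.IsClique (↑Aᶜ : Set V) := by
  have hAc : ∀ b ∈ Aᶜ, G.neighborFinset b ⊆ Aᶜ := fun b hb c hc =>
    mem_compl.mpr fun hcA =>
      mem_compl.mp hb <| hA c hcA <|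
        (G.mem_neighborFinset c b).mpr ((G.mem_neighborFinset b c).mp hc).symm
  have hsum := card_compl_add_card A
  obtain ⟨j, hj⟩ := hodd
  have hA_lt := minDegree_lt_card_of_neighborFinset_subset hA (card_pos.mp (by omega))
  have hAc_lt := minDegree_lt_card_of_neighborFinset_subset hAc (card_pos.mp (by omega))
  exact ⟨by omega, isClique_of_neighborFinset_subset hA (by omega),
    isClique_of_neighborFinset_subset hAc (by omega)⟩

theorem odd_and_exists_isClique_of_forall_not_isPerfectMatching {k : ℕ}
    (hcard : Fintype.card V = 2 * k) (hdeg : k - 1 ≤ G.minDegree) (hind : G.indepNum ≤ k)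
    (hM : ∀ M : G.Subgraph, ¬M.IsPerfectMatching) :
    Odd k ∧ ∃ A : Finset V, #A = k ∧ G.IsClique (A : Set V) ∧
      G.IsClique (↑Aᶜ : Set V) ∧ ∀ a ∈ A, ∀ b ∉ A, ¬G.Adj a b := by
  obtain ⟨u, hu⟩ :=
    exists_isTutteViolator hM (Nat.card_eq_fintype_card.trans hcard ▸ even_two_mul k)
  obtain rfl := hu.eq_empty_s11 hcard hdeg hind
  have hpos : 0 < ((⊤ : G.Subgraph).deleteVerts ∅).coe.oddComponents.ncard := by
    simpa [IsTutteViolator] using hu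
  obtain ⟨C, hC⟩ := Set.nonempty_of_ncard_ne_zero hpos.ne'
  classical
  set A := (Subtype.val '' C.supp).toFinset
  have hA : ∀ a ∈ A, G.neighborFinset a ⊆ A := by
    intro a ha b hb
    obtain ⟨x, hx, rfl⟩ := Set.mem_toFinset.mp ha
    simpa [A] using neighborSet_subset_image_supp_union hx ((G.mem_neighborFinset _ b).mp hb)
  have hodd : Odd #A := by
    rwa [← Set.ncard_eq_toFinset_card', Set.ncard_image_of_injective _ Subtype.val_injective]
  obtain ⟨hk, hAcl, hAccl⟩ := card_eq_and_isClique_of_odd_card hcard hdeg hA hodd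
  exact ⟨hk ▸ hodd, A, hk, hAcl, hAccl,
    fun a ha b hb hab => hb (hA a ha ((G.mem_neighborFinset a b).mpr hab))⟩

end TwoCliques

section Induce

theorem indepNum_induce_le [Finite V] (s : Set V) : (G.induce s).indepNum ≤ G.indepNum := by
  obtain ⟨t, ht⟩ := (G.induce s).exists_isNIndepSet_indepNum
  rw [← ht.card_eq, ← card_map (Function.Embedding.subtype _)]
  refine IsIndepSet.card_le_indepNum ?_
  rw [coe_map]
  rintro _ ⟨x, hx, rfl⟩ _ ⟨y, hy, rfl⟩ hne
  exact ht.isIndepSet hx hy (fun h => hne (h ▸ rfl))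

variable [Fintype V] [DecidableEq V] [DecidableRel G.Adj]

theorem degree_le_degree_induce_compl_add (S : Finset V) (v : ((↑S)ᶜ : Set V)) :
    G.degree v ≤ (G.induce (↑S)ᶜ).degree v + #S := by
  rw [← card_neighborFinset_eq_degree, ← card_neighborFinset_eq_degree,
    ← card_map (Function.Embedding.subtype _), map_neighborFinset_induce]
  calc #(G.neighborFinset v) ≤ #(G.neighborFinset v ∩ (↑S : Set V)ᶜ.toFinset ∪ S) :=
        card_le_card fun w hw => by by_cases w ∈ S <;> simp_all
    _ ≤ _ := card_union_le _ _

theorem sub_card_le_minDegree_induce_compl (S : Finset V) [Nonempty ((↑S)ᶜ : Set V)] :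
    G.minDegree - #S ≤ (G.induce (↑S)ᶜ).minDegree :=
  le_minDegree_of_forall_le_degree _ _ fun v => by
    have := degree_le_degree_induce_compl_add (G := G) S v
    have := G.minDegree_le_degree v
    omega

theorem subset_neighborFinset_of_neighborFinset_subset {S A : Finset V} {v : V} (hv : v ∈ A)
    (hN : G.neighborFinset v ⊆ S ∪ A) (hdeg : #S + #A ≤ G.degree v + 1) :
    S ⊆ G.neighborFinset v := by
  have hsub : G.neighborFinset v ⊆ S ∪ A.erase v := fun w hw => by
    have hne : w ≠ v := (G.ne_of_adj ((G.mem_neighborFinset v w).mp hw)).symm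
    simpa [hne] using hN hw
  have heq := eq_of_subset_of_card_le hsub <| by
    grw [card_union_le, card_erase_of_mem hv, card_neighborFinset_eq_degree]
    have := card_pos.mpr ⟨v, hv⟩
    omega
  exact heq ▸ subset_union_left

theorem isJoinTwoCliques_of_induce_compl {S : Finset V} {k : ℕ}
    (hdeg : #S + k - 1 ≤ G.minDegree) (hcard : Fintype.card ((↑S)ᶜ : Set V) = 2 * k)
    {A : Finset ((↑S)ᶜ : Set V)} (hA : #A = k)
    (hAcl : (G.induce (↑S)ᶜ).IsClique (A : Set _))
    (hAccl : (G.induce (↑S)ᶜ).IsClique (↑Aᶜ : Set _))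
    (hcross : ∀ a ∈ A, ∀ b ∉ A, ¬(G.induce (↑S)ᶜ).Adj a b) :
    IsJoinTwoCliques G #S k := by
  let e := Function.Embedding.subtype (· ∈ (↑S : Set V)ᶜ)
  have hS : ∀ X : Finset ((↑S)ᶜ : Set V), Disjoint S (X.map e) := fun X =>
    disjoint_right.mpr fun _ hx => by
      obtain ⟨x, -, rfl⟩ := mem_map.mp hx
      exact x.2
  have hclique : ∀ X : Finset ((↑S)ᶜ : Set V),
      (G.induce (↑S)ᶜ).IsClique (X : Set _) →
        ∀ u ∈ X.map e, ∀ v ∈ X.map e, u ≠ v → G.Adj u v := fun X hX => by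
    simpa [e, isClique_induce_iff, IsClique, Set.Pairwise] using hX
  have hjoin : ∀ X : Finset ((↑S)ᶜ : Set V), #X = k →
      (∀ a ∈ X, ∀ b ∉ X, ¬(G.induce (↑S)ᶜ).Adj a b) → ∀ u ∈ S, ∀ v ∈ X.map e,
        G.Adj u v := by
    intro X hX hXcross u hu v hv
    obtain ⟨x, hx, rfl⟩ := mem_map.mp hv
    refine (G.mem_neighborFinset _ _).mp (subset_neighborFinset_of_neighborFinset_subset hv
      (fun w hw => ?_) ?_ hu) |>.symm
    · by_cases hwS : w ∈ S
      · exact mem_union_left _ hwS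
      · refine mem_union_right _ (mem_map.mpr ⟨⟨w, hwS⟩, ?_, rfl⟩)
        by_contra hwX
        exact hXcross x hx _ hwX ((G.mem_neighborFinset _ _).mp hw)
    · have := G.minDegree_le_degree (e x)
      rw [card_map]
      omega
  have hAc : #Aᶜ = k := by rw [card_compl, hcard, hA]; omega
  refine ⟨S, A.map e, Aᶜ.map e, hS A, hS Aᶜ, (disjoint_map e).mpr disjoint_compl_right, ?_,
    rfl, by rw [card_map, hA], by rw [card_map, hAc], hclique A hAcl, hclique Aᶜ hAccl, ?_, ?_⟩
  · ext x
    by_cases hx : x ∈ S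
    · simp [hx]
    · by_cases hxA : (⟨x, hx⟩ : ((↑S)ᶜ : Set V)) ∈ A <;> simp [e, hx, hxA]
  · simp only [mem_map, e]
    rintro _ ⟨a, ha, rfl⟩ _ ⟨b, hb, rfl⟩
    exact hcross a ha b (mem_compl.mp hb)
  · intro u hu v hv
    rcases mem_union.mp hv with hv | hv
    · exact hjoin A hA hcross u hu v hv
    · refine hjoin Aᶜ hAc (fun a ha b hb hab => ?_) u hu v hv
      exact hcross b (by simpa using hb) a (mem_compl.mp ha) hab.symm

end Induce

end SimpleGraph

theorem factorCritical_iff_indepNum_general {V : Type*} [Fintype V] [DecidableEq V]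
    (G : SimpleGraph V) [DecidableRel G.Adj] (n : ℕ)
    (hpar : Fintype.card V % 2 = n % 2)
    (hn : n + 2 ≤ Fintype.card V)
    (hdeg : (Fintype.card V + n) / 2 - 1 ≤ G.minDegree)
    (hex : ¬ (Odd ((Fintype.card V - n) / 2) ∧
        IsJoinTwoCliques G n ((Fintype.card V - n) / 2))) :
    IsNFactorCritical G n ↔ _root_.indepNum G ≤ (Fintype.card V - n) / 2 := by
  rw [indepNum_eq_indepNum]
  refine ⟨fun hG => by have := hG.two_mul_indepNum_le (by omega); omega, fun hind S hS => ?_⟩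
  by_contra hPM
  set k := (Fintype.card V - n) / 2
  have hcard : Fintype.card ((↑S)ᶜ : Set V) = 2 * k := by
    rw [Fintype.card_compl_set]
    simp only [SetLike.coe_sort_coe, Fintype.card_coe, hS]
    omega
  have : Nonempty ((↑S)ᶜ : Set V) := Fintype.card_pos_iff.mp (by omega)
  obtain ⟨hodd, A, hA, hAcl, hAccl, hcross⟩ :=
    odd_and_exists_isClique_of_forall_not_isPerfectMatching hcard
      ((show k - 1 ≤ G.minDegree - #S by omega).trans (sub_card_le_minDegree_induce_compl S))
      ((indepNum_induce_le _).trans hind) fun M hM => hPM ⟨M, hM⟩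
  exact hex ⟨hodd,
    hS ▸ isJoinTwoCliques_of_induce_compl (by omega) hcard hA hAcl hAccl hcross⟩

/-- With ν ≡ n (mod 2) and δ(G) ≥ (ν+n)/2 − 1, if G is not the exceptional graph
G₀ ∨ (K_{(ν−n)/2} ∪ K_{(ν−n)/2}) with (ν−n)/2 odd, then G is n-factor-critical iff
α(G) ≤ (ν−n)/2. -/
theorem factorCritical_iff_indepNum {V : Type*} [Fintype V] [DecidableEq V]
    (G : SimpleGraph V) [DecidableRel G.Adj] (n : ℕ)
    (hpos : 0 < n) (hpar : Fintype.card V % 2 = n % 2)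
    (hn : n + 2 ≤ Fintype.card V)
    (hdeg : (Fintype.card V + n) / 2 - 1 ≤ G.minDegree)
    (hex : ¬ (Odd ((Fintype.card V - n) / 2) ∧
        IsJoinTwoCliques G n ((Fintype.card V - n) / 2))) :
    IsNFactorCritical G n ↔ _root_.indepNum G ≤ (Fintype.card V - n) / 2 :=
  factorCritical_iff_indepNum_general G n hpar hn hdeg hex
end

section
/- If ν is odd and ν ≥ 2k + 3, the graph G = ((ν−1)/2 − k)K₁ ∨ K_{(ν+1)/2+k} is k½-extendable with α(G) = (ν−1)/2 − k. -/
open SimpleGraph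

/-!
The graph is the complete split graph with an independent side `L` of size
`a = (ν - 1) / 2 - k` and a clique side of size `a + 2k + 1`. An edge has at most one end
in `L`, so every matching covers at least as many clique vertices as vertices of `L`.
Conversely, a vertex set of even size containing at least as many clique vertices as
vertices of `L` is exactly covered by a matching: pair its `L`-part into its clique part
and match the remaining clique vertices among themselves. After deleting one vertex and a
`k`-matching, the clique side still dominates (`a + 2k + 1 - 1 - 2k ≥ a`), so the matching
extends. The independent sets are the subsets of `L` and the single clique vertices.
-/

namespace SimpleGraph

variable {V : Type*} {G : SimpleGraph V}

/-- The matching conditions of `k`-extendability, without connectedness. -/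
def ExtendsMatchings (G : SimpleGraph V) (k : ℕ) : Prop :=
  (∃ M : G.Subgraph, M.IsMatching ∧ M.verts.ncard = 2 * k) ∧
  ∀ M : G.Subgraph, M.IsMatching → M.verts.ncard = 2 * k →
    ∃ P : G.Subgraph, P.IsPerfectMatching ∧ M ≤ P

def IsCompleteSplit (G : SimpleGraph V) (L : Set V) : Prop :=
  ∀ u v, G.Adj u v ↔ u ≠ v ∧ (u ∉ L ∨ v ∉ L)

lemma exists_isMatching_verts_eq_union {s t : Set V} (hs : s.Finite) (ht : t.Finite)
    (hst : Disjoint s t) (hcard : s.ncard = t.ncard) (hadj : ∀ u ∈ s, ∀ v ∈ t, G.Adj u v) :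
    ∃ M : G.Subgraph, M.verts = s ∪ t ∧ M.IsMatching := by
  obtain ⟨f⟩ : Nonempty (s ≃ t) := by
    rw [← Cardinal.eq, ← s.cast_ncard hs, ← t.cast_ncard ht, hcard]
  exact Subgraph.IsMatching.exists_of_disjoint_sets_of_equiv hst f fun v ↦ hadj _ v.2 _ (f v).2

namespace Subgraph

lemma IsMatching.ncard_inter_le_ncard_diff [Finite V] {M : G.Subgraph} (hM : M.IsMatching)
    {L : Set V} (hL : G.IsIndepSet L) : (M.verts ∩ L).ncard ≤ (M.verts \ L).ncard := by
  have hpartner : ∀ v, ∃ w, v ∈ M.verts → M.Adj v w := fun v ↦ by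
    by_cases hv : v ∈ M.verts
    · obtain ⟨w, hw, -⟩ := hM hv
      exact ⟨w, fun _ ↦ hw⟩
    · exact ⟨v, fun h ↦ absurd h hv⟩
  choose p hp using hpartner
  refine Set.ncard_le_ncard_of_injOn p
    (fun v ⟨hv, hvL⟩ ↦ ⟨(hp v hv).snd_mem, fun hpL ↦ ?_⟩)
    (fun u hu w hw h ↦ hM.eq_of_adj_right (hp u hu.1) (h ▸ hp w hw.1))
  have hadj := M.adj_sub (hp v hv)
  exact hL hvL hpL hadj.ne hadj

lemma IsMatching.isPerfectMatching_sup {M N : G.Subgraph} (hM : M.IsMatching)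
    (hN : N.IsMatching) (hNM : N.verts = M.vertsᶜ) : (M ⊔ N).IsPerfectMatching := by
  refine ⟨hM.sup hN ?_, fun v ↦ ?_⟩
  · rw [hM.support_eq_verts, hN.support_eq_verts, hNM]
    exact disjoint_compl_right
  · rw [verts_sup, hNM, Set.union_compl_self]
    trivial

end Subgraph

namespace IsCompleteSplit

variable {L : Set V}

lemma isIndepSet (hG : G.IsCompleteSplit L) : G.IsIndepSet L :=
  fun u hu v hv _ h ↦ ((hG u v).1 h).2.elim (· hu) (· hv)

lemma isClique_compl (hG : G.IsCompleteSplit L) : G.IsClique Lᶜ :=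
  fun u hu v _ hne ↦ (hG u v).2 ⟨hne, .inl hu⟩

lemma exists_isMatching_verts_eq [Finite V] (hG : G.IsCompleteSplit L) {S : Set V}
    (hcard : (S ∩ L).ncard ≤ (S \ L).ncard) (heven : Even S.ncard) :
    ∃ M : G.Subgraph, M.verts = S ∧ M.IsMatching := by
  obtain ⟨B, hB, hBcard⟩ := Set.exists_subset_card_eq hcard
  obtain ⟨N₁, hN₁, hN₁m⟩ := exists_isMatching_verts_eq_union (G := G) (S ∩ L).toFinite
    B.toFinite (Set.disjoint_of_subset_right hB Set.disjoint_sdiff_inter.symm) hBcard.symm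
    fun u hu v hv ↦ (hG u v).2 ⟨fun h ↦ (hB hv).2 (h ▸ hu.2), .inr (hB hv).2⟩
  have hrest : Even ((S \ L) \ B).ncard := by
    have := Set.ncard_inter_add_ncard_sdiff_eq_ncard S L
    rw [Set.ncard_sdiff hB, hBcard]
    rw [Nat.even_iff] at heven ⊢
    omega
  have hclique : G.IsClique ((S \ L) \ B) := hG.isClique_compl.subset fun v hv ↦ hv.1.2
  obtain ⟨N₂, hN₂, hN₂m⟩ := (hclique.even_iff_exists_isMatching (Set.toFinite _)).1 hrest
  refine ⟨N₁ ⊔ N₂, ?_, hN₁m.sup hN₂m ?_⟩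
  · rw [Subgraph.verts_sup, hN₁, hN₂, Set.union_assoc, Set.union_sdiff_cancel hB,
      Set.inter_union_sdiff]
  · rw [hN₁m.support_eq_verts, hN₂m.support_eq_verts, hN₁, hN₂]
    exact Set.disjoint_union_left.2
      ⟨Set.disjoint_left.2 fun v hv hv' ↦ hv'.1.2 hv.2, Set.disjoint_sdiff_right⟩

lemma extendsMatchings [Finite V] (hG : G.IsCompleteSplit L) {k : ℕ}
    (hcard : L.ncard + 2 * k ≤ Lᶜ.ncard) (heven : Even (Nat.card V)) :
    G.ExtendsMatchings k := by
  refine ⟨?_, fun M hM hMcard ↦ ?_⟩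
  · obtain ⟨S, hS, hScard⟩ := Set.exists_subset_card_eq (le_of_add_le_right hcard)
    have hSL : S ∩ L = ∅ :=
      Set.disjoint_iff_inter_eq_empty.1 (Set.subset_compl_iff_disjoint_right.1 hS)
    obtain ⟨N, hN, hNm⟩ := hG.exists_isMatching_verts_eq (S := S)
      (by simp [hSL]) (hScard ▸ even_two_mul k)
    exact ⟨N, hNm, hN ▸ hScard⟩
  · have hmatched := hM.ncard_inter_le_ncard_diff hG.isIndepSet
    have hsplit := Set.ncard_inter_add_ncard_sdiff_eq_ncard M.verts L
    have hL := Set.ncard_inter_add_ncard_sdiff_eq_ncard L M.verts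
    have hLc := Set.ncard_inter_add_ncard_sdiff_eq_ncard Lᶜ M.verts
    rw [Set.inter_comm] at hL
    rw [show Lᶜ ∩ M.verts = M.verts \ L from Set.inter_comm _ _] at hLc
    have hfree : (M.vertsᶜ ∩ L).ncard ≤ (M.vertsᶜ \ L).ncard := by
      rw [show M.vertsᶜ ∩ L = L \ M.verts from Set.inter_comm _ _,
        show M.vertsᶜ \ L = Lᶜ \ M.verts by ext; simp [and_comm]]
      omega
    have hfree_even : Even M.vertsᶜ.ncard := by
      have := Set.ncard_add_ncard_compl M.verts
      obtain ⟨r, hr⟩ := heven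
      exact ⟨r - k, by omega⟩
    obtain ⟨N, hN, hNm⟩ := hG.exists_isMatching_verts_eq hfree hfree_even
    exact ⟨M ⊔ N, hM.isPerfectMatching_sup hNm hN, le_sup_left⟩

lemma induce (hG : G.IsCompleteSplit L) (s : Set V) :
    (G.induce s).IsCompleteSplit (Subtype.val ⁻¹' L) := fun u v ↦ by
  simp [hG u v, Subtype.ext_iff]

lemma connected (hG : G.IsCompleteSplit L) {x : V} (hx : x ∉ L) : G.Connected := by
  refine G.connected_iff_exists_forall_reachable.2 ⟨x, fun w ↦ ?_⟩
  by_cases h : x = w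
  · exact h ▸ Reachable.refl x
  · exact ((hG x w).2 ⟨h, .inl hx⟩).reachable

lemma isHalfExtendable [Finite V] (hG : G.IsCompleteSplit L) {k : ℕ}
    (hcard : L.ncard + 2 * k < Lᶜ.ncard) (hodd : Odd (Nat.card V)) : IsHalfExtendable G k := by
  obtain ⟨x, hx⟩ := Set.nonempty_of_ncard_ne_zero (s := Lᶜ) (by omega)
  refine ⟨hG.connected hx, fun v ↦ (hG.induce {v}ᶜ).extendsMatchings ?_ ?_⟩
  · have hle : (Subtype.val ⁻¹' L : Set ↥({v}ᶜ : Set V)).ncard ≤ L.ncard :=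
      Set.ncard_le_ncard_of_injOn Subtype.val (fun _ h ↦ h) Subtype.val_injective.injOn
    have hsum := Set.ncard_add_ncard_compl (Subtype.val ⁻¹' L : Set ↥({v}ᶜ : Set V))
    have := Set.ncard_add_ncard_compl L
    rw [Nat.card_coe_set_eq, Set.ncard_compl ({v} : Set V), Set.ncard_singleton] at hsum
    omega
  · rw [Nat.card_coe_set_eq, Set.ncard_compl, Set.ncard_singleton]
    exact Nat.Odd.sub_odd hodd odd_one

lemma indepNum_eq [Finite V] (hG : G.IsCompleteSplit L) (hL : L.Nonempty) :
    _root_.indepNum G = L.ncard := by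
  refine IsGreatest.csSup_eq ⟨⟨L.toFinite.toFinset, fun u hu v hv h ↦ ?_,
    (Set.ncard_eq_toFinset_card L).symm⟩, ?_⟩
  · rw [Set.Finite.mem_toFinset] at hu hv
    exact hG.isIndepSet hu hv h.ne h
  rintro _ ⟨s, hs, rfl⟩
  by_cases hsL : ∀ u ∈ s, u ∈ L
  · rw [← Set.ncard_coe_finset]
    exact Set.ncard_le_ncard hsL
  push Not at hsL
  obtain ⟨x, hxs, hxL⟩ := hsL
  have hx : ∀ u ∈ s, u = x := fun u hu ↦
    by_contra fun hne ↦ hs x hxs u hu ((hG x u).2 ⟨Ne.symm hne, .inl hxL⟩)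
  calc s.card ≤ 1 := Finset.card_le_one.2 fun u hu v hv ↦ (hx u hu).trans (hx v hv).symm
    _ ≤ L.ncard := (Set.ncard_pos).2 hL

end IsCompleteSplit

end SimpleGraph

lemma isCompleteSplit_graphJoin_bot_top (α β : Type*) :
    (graphJoin (⊥ : SimpleGraph α) (⊤ : SimpleGraph β)).IsCompleteSplit
      (Set.range Sum.inl) := by
  rintro (a | b) (a' | b') <;> simp [graphJoin, ne_comm]

/-- For odd ν ≥ 2k + 3, the graph ((ν−1)/2 − k)K₁ ∨ K_{(ν+1)/2+k} is k½-extendable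
with independence number exactly (ν−1)/2 − k. -/
theorem join_indep_clique_halfExtendable (ν k : ℕ)
    (hodd : Odd ν) (hν : 2 * k + 3 ≤ ν) :
    IsHalfExtendable
        (graphJoin (⊥ : SimpleGraph (Fin ((ν - 1) / 2 - k)))
          (⊤ : SimpleGraph (Fin ((ν + 1) / 2 + k)))) k ∧
      _root_.indepNum
        (graphJoin (⊥ : SimpleGraph (Fin ((ν - 1) / 2 - k)))
          (⊤ : SimpleGraph (Fin ((ν + 1) / 2 + k)))) = (ν - 1) / 2 - k := by
  set a := (ν - 1) / 2 - k
  set b := (ν + 1) / 2 + k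
  have hG := isCompleteSplit_graphJoin_bot_top (Fin a) (Fin b)
  have hL : (Set.range (Sum.inl : Fin a → Fin a ⊕ Fin b)).ncard = a := by
    rw [Set.ncard_range_of_injective Sum.inl_injective, Nat.card_fin]
  have hLc : (Set.range (Sum.inl : Fin a → Fin a ⊕ Fin b))ᶜ.ncard = b := by
    rw [Set.compl_range_inl, Set.ncard_range_of_injective Sum.inr_injective, Nat.card_fin]
  obtain ⟨m, hm⟩ := hodd
  refine ⟨hG.isHalfExtendable (by omega) ⟨m, ?_⟩, ?_⟩
  · rw [Nat.card_sum, Nat.card_fin, Nat.card_fin]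
    omega
  · rw [hG.indepNum_eq ⟨_, Set.mem_range_self ⟨0, by omega⟩⟩, hL]
end

section
/- Let G be a graph with ν ≡ n (mod 2) and δ(G) ≥ (ν+n)/2 − 1. If S ⊆ V(G) with |S| ≥ n and o(G−S) ≥ |S| − n + 2, then |S| ≤ n or |S| ≥ (ν+n)/2 − 1. -/
open SimpleGraph

private lemma supp_card_eq_filter {W : Type*} [Fintype W] [DecidableEq W]
    (H : SimpleGraph W) [DecidableRel H.Adj] [DecidableEq H.ConnectedComponent]
    (c : H.ConnectedComponent) :
    Nat.card c.supp = (Finset.univ.filter fun v => H.connectedComponentMk v = c).card := by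
  rw [Nat.card_eq_fintype_card, ← Fintype.card_subtype]
  exact Fintype.card_congr (Equiv.subtypeEquivRight (fun v => c.mem_supp_iff v))

private lemma exists_small_odd_component {W : Type*} [Fintype W] [DecidableEq W]
    (H : SimpleGraph W) [DecidableRel H.Adj] (hq : 1 ≤ numOddComponents H) :
    ∃ c : H.ConnectedComponent, Odd (Nat.card c.supp) ∧
      numOddComponents H * Nat.card c.supp ≤ Fintype.card W := by
  classical
  set T := Finset.univ.filter (fun c : H.ConnectedComponent => Odd (Nat.card c.supp)) with hT
  have hqT : numOddComponents H = T.card := by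
    rw [numOddComponents, Nat.card_eq_fintype_card, Fintype.card_subtype]
  have hq1 : 1 ≤ T.card := hqT ▸ hq
  obtain ⟨c₀, hc₀T, hc₀min⟩ :=
    T.exists_min_image (fun c => Nat.card c.supp) (Finset.card_pos.mp hq1)
  refine ⟨c₀, (Finset.mem_filter.mp hc₀T).2, ?_⟩
  rw [hqT]
  have h1 : T.card • Nat.card c₀.supp ≤ ∑ c ∈ T, Nat.card c.supp :=
    Finset.card_nsmul_le_sum T _ _ (fun c hc => hc₀min c hc)
  rw [smul_eq_mul] at h1
  refine h1.trans ?_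
  calc ∑ c ∈ T, Nat.card c.supp
      ≤ ∑ c : H.ConnectedComponent, Nat.card c.supp :=
        Finset.sum_le_sum_of_subset (Finset.subset_univ T)
    _ = ∑ c : H.ConnectedComponent,
          (Finset.univ.filter fun v => H.connectedComponentMk v = c).card :=
        Finset.sum_congr rfl (fun c _ => supp_card_eq_filter H c)
    _ = Fintype.card W := by
        rw [← Finset.card_univ]
        exact (Finset.card_eq_sum_card_fiberwise (fun v _ => Finset.mem_univ _)).symm

/-- With ν ≡ n (mod 2) and δ(G) ≥ (ν+n)/2 − 1: if |S| ≥ n and G − S has at least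
|S| − n + 2 odd components, then |S| ≤ n or |S| ≥ (ν+n)/2 − 1. -/
theorem cut_size_bound {V : Type*} [Fintype V] [DecidableEq V]
    (G : SimpleGraph V) [DecidableRel G.Adj] (n : ℕ)
    (hpar : Fintype.card V % 2 = n % 2)
    (hdeg : (Fintype.card V + n) / 2 - 1 ≤ G.minDegree)
    (S : Finset V) (hS : n ≤ S.card)
    (ho : S.card - n + 2 ≤ numOddComponents (G.induce ((↑S : Set V)ᶜ))) :
    S.card ≤ n ∨ (Fintype.card V + n) / 2 - 1 ≤ S.card := by
  classical
  rcases le_or_gt S.card n with h | h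
  · exact Or.inl h
  right
  by_contra hcon
  push_neg at hcon
  have hq1 : 1 ≤ numOddComponents (G.induce ((↑S : Set V)ᶜ)) := by omega
  obtain ⟨c₀, hodd, hqm⟩ := exists_small_odd_component (G.induce ((↑S : Set V)ᶜ)) hq1
  have hKcard : Fintype.card ((↑S : Set V)ᶜ : Set V) = Fintype.card V - S.card := by
    rw [Fintype.card_compl_set]
    simp
  have hsν : S.card ≤ Fintype.card V := Finset.card_le_univ S
  set m := Nat.card c₀.supp with hm
  have hm1 : 1 ≤ m := hodd.pos
  -- pick a vertex of the smallest odd component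
  have : Nonempty c₀.supp := (Nat.card_pos_iff.mp (hm ▸ hm1)).1
  obtain ⟨⟨v, hvK⟩, hv⟩ := this
  -- degree bound
  have hdegv : G.degree v ≤ S.card + (m - 1) := by
    have hsub : G.neighborFinset v ⊆
        S ∪ (c₀.supp.toFinset.image (Subtype.val)).erase v := by
      intro w hw
      rw [SimpleGraph.mem_neighborFinset] at hw
      by_cases hwS : w ∈ S
      · exact Finset.mem_union_left _ hwS
      · have hwK : w ∈ ((↑S : Set V)ᶜ : Set V) := by simp [hwS]
        have hadj : (G.induce ((↑S : Set V)ᶜ)).Adj ⟨v, hvK⟩ ⟨w, hwK⟩ := by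
          simp only [comap_adj, Function.Embedding.coe_subtype]
          exact hw
        have hmk : (G.induce ((↑S : Set V)ᶜ)).connectedComponentMk ⟨w, hwK⟩ = c₀ := by
          rw [← (c₀.mem_supp_iff ⟨v, hvK⟩).mp hv]
          exact SimpleGraph.ConnectedComponent.sound hadj.symm.reachable
        refine Finset.mem_union_right _ (Finset.mem_erase.mpr ⟨hw.ne', ?_⟩)
        refine Finset.mem_image.mpr ⟨⟨w, hwK⟩, ?_, rfl⟩
        rw [Set.mem_toFinset]
        exact (c₀.mem_supp_iff _).mpr hmk
    have himg : (c₀.supp.toFinset.image (Subtype.val)).card = m := by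
      rw [Finset.card_image_of_injective _ Subtype.val_injective,
        Set.toFinset_card, ← Nat.card_eq_fintype_card]
    have hvmem : v ∈ c₀.supp.toFinset.image (Subtype.val) :=
      Finset.mem_image.mpr ⟨⟨v, hvK⟩, Set.mem_toFinset.mpr hv, rfl⟩
    calc G.degree v = (G.neighborFinset v).card := rfl
      _ ≤ (S ∪ (c₀.supp.toFinset.image (Subtype.val)).erase v).card :=
          Finset.card_le_card hsub
      _ ≤ S.card + ((c₀.supp.toFinset.image (Subtype.val)).erase v).card :=
          Finset.card_union_le _ _
      _ = S.card + (m - 1) := by rw [Finset.card_erase_of_mem hvmem, himg]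
  have hmin : G.minDegree ≤ G.degree v := G.minDegree_le_degree v
  -- arithmetic wrap-up
  set ν := Fintype.card V with hν
  set s := S.card with hs'
  set q := numOddComponents (G.induce ((↑S : Set V)ᶜ)) with hqdef
  set D := (ν + n) / 2 with hD
  have hDms : D ≤ m + s := by omega
  have h2D : 2 * D = ν + n := by omega
  have hD2 : s + 2 ≤ D := by omega
  have hqm' : q * m + s ≤ ν := by
    rw [hKcard] at hqm; omega
  have hqmZ : (q : ℤ) * m + s ≤ (ν : ℤ) := by exact_mod_cast hqm'
  have hq3Z : (s : ℤ) - n + 2 ≤ (q : ℤ) := by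
    have : s - n + 2 ≤ q := ho
    push_cast
    omega
  have hDmsZ : (D : ℤ) ≤ m + s := by exact_mod_cast hDms
  have h2DZ : 2 * (D : ℤ) = ν + n := by exact_mod_cast h2D
  have hnsZ : (n : ℤ) + 1 ≤ s := by exact_mod_cast h
  have hD2Z : (s : ℤ) + 2 ≤ D := by exact_mod_cast hD2
  have hmZ : (1 : ℤ) ≤ m := by exact_mod_cast hm1
  nlinarith [mul_nonneg (by linarith : (0:ℤ) ≤ (q : ℤ) - ((s:ℤ) - n + 2))
      (by linarith : (0:ℤ) ≤ (m:ℤ)),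
    mul_nonneg (by linarith : (0:ℤ) ≤ (s:ℤ) - n + 2)
      (by linarith : (0:ℤ) ≤ (m:ℤ) - ((D:ℤ) - s)),
    mul_pos (by linarith : (0:ℤ) < (s:ℤ) - n)
      (by linarith : (0:ℤ) < (D:ℤ) - s - 1)]
end
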